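/- arXiv:1901.09949 — 5 statements merged into one kernel-verified Lean document; each statement's English description precedes it below -/
import Mathlib

section
/- There exists an absolute constant c > 0 such that for every n ≥ 2 and every orthogonal system φ_1, …, φ_n in L²(0,1) one has ‖ max_{1 ≤ m ≤ n} | ∑_{k=1}^m φ_k | ‖_{L²(0,1)} ≤ c · (log n) · ‖ ∑_{k=1}^n φ_k ‖_{L²(0,1)}. -/
/-!
Write `S_m` for the partial sums and `M_m = max_{j ≤ m} |S_j|`. Splitting `ψ_1, …, ψ_{a+b}` after
index `a`, pointwise `M_{a+b} ≤ max(M_a, |S_a| + M'_b)`, where `M'_b` is the maximal partial sum of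
the shifted family `ψ_{a+1}, …, ψ_{a+b}`. Since `‖max(f, g)‖₂² ≤ ‖f‖₂² + ‖g‖₂²` and orthogonality
gives `‖S_{a+b}‖₂² = ‖S_a‖₂² + ‖S_{a+b} - S_a‖₂²`, halving the range shows by induction that
families of length at most `2^p` satisfy `‖M‖₂ ≤ (p + 1) ‖S‖₂`, the inductive step being
`((p+1)x)² + (x + (p+1)y)² ≤ (p+2)² (x² + y²)`. Then take `p = ⌊log₂ n⌋ + 1`.
-/

open MeasureTheory
open scoped ENNReal

section PartialSums

variable {α : Type*}

def partialSum (ψ : ℕ → α → ℝ) (n : ℕ) (x : α) : ℝ := ∑ k ∈ Finset.Icc 1 n, ψ k x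

noncomputable def maxPartialSum (ψ : ℕ → α → ℝ) (n : ℕ) (x : α) : ℝ :=
  ⨆ m : Fin n, |partialSum ψ (m + 1) x|

variable {ψ : ℕ → α → ℝ} {n : ℕ} {x : α}

lemma partialSum_add (ψ : ℕ → α → ℝ) (a b : ℕ) (x : α) :
    partialSum ψ (a + b) x = partialSum ψ a x + partialSum (fun k => ψ (a + k)) b x := by
  induction b with
  | zero => simp [partialSum]
  | succ b ih =>
    simp only [partialSum] at ih ⊢
    rw [← add_assoc, Finset.sum_Icc_succ_top (by omega), Finset.sum_Icc_succ_top (by omega), ih,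
      add_assoc, add_assoc]

lemma maxPartialSum_nonneg : 0 ≤ maxPartialSum ψ n x :=
  Real.iSup_nonneg fun _ => abs_nonneg _

lemma abs_partialSum_le_maxPartialSum {m : ℕ} (hm : m < n) :
    |partialSum ψ (m + 1) x| ≤ maxPartialSum ψ n x :=
  le_ciSup (f := fun m : Fin n => |partialSum ψ (m + 1) x|) (Set.finite_range _).bddAbove ⟨m, hm⟩

lemma maxPartialSum_le {c : ℝ} (h : ∀ m < n, |partialSum ψ (m + 1) x| ≤ c) (hc : 0 ≤ c) :
    maxPartialSum ψ n x ≤ c :=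
  Real.iSup_le (fun m => h m m.2) hc

lemma maxPartialSum_le_abs_partialSum_of_le_one (hn : n ≤ 1) :
    maxPartialSum ψ n x ≤ |partialSum ψ n x| :=
  maxPartialSum_le (fun m hm => by rw [show m + 1 = n by omega]) (abs_nonneg _)

lemma maxPartialSum_add_le (a b : ℕ) :
    maxPartialSum ψ (a + b) x ≤
      max (maxPartialSum ψ a x) (|partialSum ψ a x| + maxPartialSum (fun k => ψ (a + k)) b x) := by
  refine maxPartialSum_le (fun m hm => ?_) (maxPartialSum_nonneg.trans (le_max_left _ _))
  rcases lt_or_ge m a with hma | ham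
  · exact le_max_of_le_left (abs_partialSum_le_maxPartialSum hma)
  · obtain ⟨m, rfl⟩ := Nat.exists_eq_add_of_le ham
    refine le_max_of_le_right ?_
    rw [add_assoc, partialSum_add]
    grw [abs_add_le, abs_partialSum_le_maxPartialSum (by omega : m < b)]

end PartialSums

section OrthogonalSystem

variable {α : Type*} [MeasurableSpace α] {μ : Measure α}

lemma eLpNorm_add_sq_eq_of_integral_inner_eq_zero {E : Type*} [NormedAddCommGroup E]
    [InnerProductSpace ℝ E] {u v : α → E} (hu : MemLp u 2 μ) (hv : MemLp v 2 μ)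
    (huv : ∫ x, inner ℝ (u x) (v x) ∂μ = 0) :
    eLpNorm (u + v) 2 μ ^ 2 = eLpNorm u 2 μ ^ 2 + eLpNorm v 2 μ ^ 2 := by
  have hUV : inner ℝ (hu.toLp u) (hv.toLp v) = 0 := by
    rw [L2.inner_def, ← huv]
    refine integral_congr_ae ?_
    filter_upwards [hu.coeFn_toLp, hv.coeFn_toLp] with x hux hvx
    rw [hux, hvx]
  rw [← Lp.enorm_toLp hu, ← Lp.enorm_toLp hv, ← Lp.enorm_toLp (hu.add hv), MemLp.toLp_add hu hv]
  simp only [sq, ← ofReal_norm, ← ENNReal.ofReal_mul (norm_nonneg _)]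
  rw [norm_add_sq_eq_norm_sq_add_norm_sq_real hUV,
    ENNReal.ofReal_add (by positivity) (by positivity)]

lemma eLpNorm_two_sq_eq_lintegral {E : Type*} [NormedAddCommGroup E] (f : α → E) :
    eLpNorm f 2 μ ^ 2 = ∫⁻ x, ‖f x‖ₑ ^ 2 ∂μ := by
  simpa using eLpNorm_nnreal_pow_eq_lintegral (μ := μ) (f := f) (p := 2) two_ne_zero

lemma eLpNorm_max_sq_le {f g : α → ℝ} (hf : AEStronglyMeasurable f μ) :
    eLpNorm (fun x => max (f x) (g x)) 2 μ ^ 2 ≤ eLpNorm f 2 μ ^ 2 + eLpNorm g 2 μ ^ 2 := by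
  simp only [eLpNorm_two_sq_eq_lintegral]
  rw [← lintegral_add_left' (hf.enorm.pow_const 2)]
  refine lintegral_mono fun x => ?_
  rcases max_choice (f x) (g x) with h | h <;> rw [h]
  exacts [le_self_add, le_add_self]

lemma integral_sum_mul_sum_eq_zero {ι κ : Type*} {s : Finset ι} {t : Finset κ}
    {f : ι → α → ℝ} {g : κ → α → ℝ} (hf : ∀ i ∈ s, MemLp (f i) 2 μ) (hg : ∀ j ∈ t, MemLp (g j) 2 μ)
    (hfg : ∀ i ∈ s, ∀ j ∈ t, ∫ x, f i x * g j x ∂μ = 0) :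
    ∫ x, (∑ i ∈ s, f i x) * (∑ j ∈ t, g j x) ∂μ = 0 := by
  simp_rw [Finset.sum_mul_sum]
  have hint : ∀ i ∈ s, ∀ j ∈ t, Integrable (fun x => f i x * g j x) μ :=
    fun i hi j hj => (hf i hi).integrable_mul (hg j hj)
  rw [integral_finsetSum _ fun i hi => integrable_finsetSum _ (hint i hi)]
  refine Finset.sum_eq_zero fun i hi => ?_
  rw [integral_finsetSum _ (hint i hi)]
  exact Finset.sum_eq_zero fun j hj => hfg i hi j hj

-- The cross term `2c·ab` is absorbed by `c(a² + b²)`.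
lemma ENNReal.mul_sq_add_add_mul_sq_le (a b c : ℝ≥0∞) :
    (c * a) ^ 2 + (a + c * b) ^ 2 ≤ (c + 1) ^ 2 * (a ^ 2 + b ^ 2) := by
  rcases eq_or_ne a ⊤ with rfl | ha
  · simp
  rcases eq_or_ne b ⊤ with rfl | hb
  · simp
  rcases eq_or_ne c ⊤ with rfl | hc
  · obtain rfl | ha0 := eq_or_ne a 0 <;> obtain rfl | hb0 := eq_or_ne b 0 <;> simp [*]
  lift a to NNReal using ha
  lift b to NNReal using hb
  lift c to NNReal using hc
  norm_cast
  rw [← NNReal.coe_le_coe]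
  push_cast
  nlinarith [mul_nonneg c.coe_nonneg (sq_nonneg ((a : ℝ) - b)), sq_nonneg (b : ℝ), c.coe_nonneg]

structure IsOrthogonalSystem (μ : Measure α) (ψ : ℕ → α → ℝ) (n : ℕ) : Prop where
  memLp : ∀ k ∈ Finset.Icc 1 n, MemLp (ψ k) 2 μ
  integral_mul_eq_zero :
    ∀ i ∈ Finset.Icc 1 n, ∀ j ∈ Finset.Icc 1 n, i ≠ j → ∫ x, ψ i x * ψ j x ∂μ = 0

variable {ψ : ℕ → α → ℝ} {n : ℕ}

lemma memLp_partialSum {p : ℝ≥0∞} (hψ : ∀ k ∈ Finset.Icc 1 n, MemLp (ψ k) p μ) :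
    MemLp (partialSum ψ n) p μ :=
  memLp_finsetSum _ hψ

lemma aestronglyMeasurable_partialSum
    (hψ : ∀ k ∈ Finset.Icc 1 n, AEStronglyMeasurable (ψ k) μ) :
    AEStronglyMeasurable (partialSum ψ n) μ :=
  Finset.aestronglyMeasurable_fun_sum _ hψ

lemma aestronglyMeasurable_maxPartialSum
    (hψ : ∀ k ∈ Finset.Icc 1 n, AEStronglyMeasurable (ψ k) μ) :
    AEStronglyMeasurable (maxPartialSum ψ n) μ :=
  (AEMeasurable.iSup fun m : Fin n => (aestronglyMeasurable_partialSum fun k hk =>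
    hψ k (Finset.Icc_subset_Icc_right m.2 hk)).aemeasurable.abs).aestronglyMeasurable

lemma eLpNorm_maxPartialSum_add_sq_le {a b : ℕ}
    (hψ : ∀ k ∈ Finset.Icc 1 (a + b), AEStronglyMeasurable (ψ k) μ) :
    eLpNorm (maxPartialSum ψ (a + b)) 2 μ ^ 2 ≤ eLpNorm (maxPartialSum ψ a) 2 μ ^ 2 +
      (eLpNorm (partialSum ψ a) 2 μ + eLpNorm (maxPartialSum (fun k => ψ (a + k)) b) 2 μ) ^ 2 := by
  have hψa : ∀ k ∈ Finset.Icc 1 a, AEStronglyMeasurable (ψ k) μ :=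
    fun k hk => hψ k (Finset.Icc_subset_Icc_right le_self_add hk)
  have hψb : ∀ k ∈ Finset.Icc 1 b, AEStronglyMeasurable (ψ (a + k)) μ :=
    fun k hk => hψ _ (by simp only [Finset.mem_Icc] at hk ⊢; omega)
  calc eLpNorm (maxPartialSum ψ (a + b)) 2 μ ^ 2
      ≤ eLpNorm (fun x => max (maxPartialSum ψ a x)
          (|partialSum ψ a x| + maxPartialSum (fun k => ψ (a + k)) b x)) 2 μ ^ 2 := by
        gcongr
        refine eLpNorm_mono_real fun x => ?_
        rw [Real.norm_eq_abs, abs_of_nonneg maxPartialSum_nonneg]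
        exact maxPartialSum_add_le a b
    _ ≤ eLpNorm (maxPartialSum ψ a) 2 μ ^ 2 + eLpNorm (fun x =>
          |partialSum ψ a x| + maxPartialSum (fun k => ψ (a + k)) b x) 2 μ ^ 2 :=
        eLpNorm_max_sq_le (aestronglyMeasurable_maxPartialSum hψa)
    _ ≤ _ := by
        gcongr
        calc _ ≤ eLpNorm (fun x => |partialSum ψ a x|) 2 μ +
              eLpNorm (maxPartialSum (fun k => ψ (a + k)) b) 2 μ :=
              eLpNorm_add_le (f := fun x => |partialSum ψ a x|)
                (aestronglyMeasurable_partialSum hψa).norm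
                (aestronglyMeasurable_maxPartialSum hψb) one_le_two
          _ = _ := congrArg (· + _) (eLpNorm_norm (partialSum ψ a))

namespace IsOrthogonalSystem

lemma mono {m : ℕ} (h : IsOrthogonalSystem μ ψ n) (hmn : m ≤ n) : IsOrthogonalSystem μ ψ m where
  memLp k hk := h.memLp k (Finset.Icc_subset_Icc_right hmn hk)
  integral_mul_eq_zero i hi j hj := h.integral_mul_eq_zero i (Finset.Icc_subset_Icc_right hmn hi)
    j (Finset.Icc_subset_Icc_right hmn hj)

lemma shift {a b : ℕ} (h : IsOrthogonalSystem μ ψ (a + b)) :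
    IsOrthogonalSystem μ (fun k => ψ (a + k)) b where
  memLp k hk := h.memLp _ (by simp only [Finset.mem_Icc] at hk ⊢; omega)
  integral_mul_eq_zero i hi j hj hij :=
    h.integral_mul_eq_zero _ (by simp only [Finset.mem_Icc] at hi ⊢; omega) _
      (by simp only [Finset.mem_Icc] at hj ⊢; omega) (by omega)

lemma eLpNorm_partialSum_add_sq {a b : ℕ} (h : IsOrthogonalSystem μ ψ (a + b)) :
    eLpNorm (partialSum ψ (a + b)) 2 μ ^ 2 =
      eLpNorm (partialSum ψ a) 2 μ ^ 2 + eLpNorm (partialSum (fun k => ψ (a + k)) b) 2 μ ^ 2 := by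
  have hsplit : partialSum ψ (a + b) = partialSum ψ a + partialSum (fun k => ψ (a + k)) b :=
    funext (partialSum_add ψ a b)
  rw [hsplit]
  refine eLpNorm_add_sq_eq_of_integral_inner_eq_zero (memLp_partialSum (h.mono le_self_add).memLp)
    (memLp_partialSum h.shift.memLp) ?_
  simp only [Real.inner_apply]
  refine integral_sum_mul_sum_eq_zero (h.mono le_self_add).memLp h.shift.memLp fun i hi j hj => ?_
  simp only [Finset.mem_Icc] at hi hj
  exact h.integral_mul_eq_zero _ (by simp only [Finset.mem_Icc]; omega) _
    (by simp only [Finset.mem_Icc]; omega) (by omega)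

theorem eLpNorm_maxPartialSum_le (h : IsOrthogonalSystem μ ψ n) {p : ℕ} (hn : n ≤ 2 ^ p) :
    eLpNorm (maxPartialSum ψ n) 2 μ ≤ (p + 1) * eLpNorm (partialSum ψ n) 2 μ := by
  induction p generalizing n ψ with
  | zero =>
    calc eLpNorm (maxPartialSum ψ n) 2 μ ≤ eLpNorm (partialSum ψ n) 2 μ :=
          eLpNorm_mono fun x => by
            rw [Real.norm_eq_abs, Real.norm_eq_abs, abs_of_nonneg maxPartialSum_nonneg]
            exact maxPartialSum_le_abs_partialSum_of_le_one (by simpa using hn)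
      _ = _ := by simp
  | succ p ih =>
    obtain ⟨a, b, rfl, ha, hb⟩ : ∃ a b, n = a + b ∧ a ≤ 2 ^ p ∧ b ≤ 2 ^ p :=
      ⟨n / 2, n - n / 2, by omega, by rw [pow_succ] at hn; omega, by rw [pow_succ] at hn; omega⟩
    set A := eLpNorm (partialSum ψ a) 2 μ
    set B := eLpNorm (partialSum (fun k => ψ (a + k)) b) 2 μ
    rw [← ENNReal.pow_le_pow_left_iff two_ne_zero]
    calc eLpNorm (maxPartialSum ψ (a + b)) 2 μ ^ 2
        ≤ ((p + 1) * A) ^ 2 + (A + (p + 1) * B) ^ 2 := by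
          grw [eLpNorm_maxPartialSum_add_sq_le fun k hk => (h.memLp k hk).1,
            ih (h.mono le_self_add) ha, ih h.shift hb]
      _ ≤ ((p + 1) + 1) ^ 2 * (A ^ 2 + B ^ 2) := ENNReal.mul_sq_add_add_mul_sq_le A B (p + 1)
      _ = _ := by rw [mul_pow, h.eLpNorm_partialSum_add_sq, Nat.cast_succ]

end IsOrthogonalSystem

end OrthogonalSystem

lemma natLog_add_two_le_three_mul_logb {n : ℕ} (hn : 2 ≤ n) :
    (Nat.log 2 n : ℝ) + 2 ≤ 3 * Real.logb 2 n := by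
  have hlog : (Nat.log 2 n : ℝ) ≤ Real.logb 2 n := by exact_mod_cast Real.natLog_le_logb n 2
  have hone : 1 ≤ Real.logb 2 n := by
    rw [Real.le_logb_iff_rpow_le one_lt_two (by positivity), Real.rpow_one]
    exact_mod_cast hn
  linarith

/-- **Menshov–Rademacher inequality.** There is an absolute constant `c > 0` such that for
every `n ≥ 2` and every orthogonal system `φ_1, …, φ_n` in `L²(0,1)`,
`‖max_{1 ≤ m ≤ n} |∑_{k=1}^m φ_k|‖₂ ≤ c ⬝ log₂ n ⬝ ‖∑_{k=1}^n φ_k‖₂`. -/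
theorem menshov_rademacher_inequality :
    ∃ c : ℝ, 0 < c ∧ ∀ n : ℕ, 2 ≤ n → ∀ φ : ℕ → ℝ → ℝ,
      (∀ k, 1 ≤ k → k ≤ n → MemLp (φ k) 2 (volume.restrict (Set.Ioo (0:ℝ) 1))) →
      (∀ i j, 1 ≤ i → i ≤ n → 1 ≤ j → j ≤ n → i ≠ j →
        ∫ x in Set.Ioo (0:ℝ) 1, φ i x * φ j x = 0) →
      eLpNorm (fun x => ⨆ m : Fin n, |∑ k ∈ Finset.Icc 1 (m.1 + 1), φ k x|) 2
          (volume.restrict (Set.Ioo (0:ℝ) 1)) ≤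
        ENNReal.ofReal (c * Real.logb 2 n) *
          eLpNorm (fun x => ∑ k ∈ Finset.Icc 1 n, φ k x) 2
            (volume.restrict (Set.Ioo (0:ℝ) 1)) := by
  refine ⟨3, three_pos, fun n hn φ hL2 horth => ?_⟩
  have hφ : IsOrthogonalSystem (volume.restrict (Set.Ioo (0:ℝ) 1)) φ n :=
    ⟨fun k hk => hL2 k (Finset.mem_Icc.1 hk).1 (Finset.mem_Icc.1 hk).2,
      fun i hi j hj => horth i j (Finset.mem_Icc.1 hi).1 (Finset.mem_Icc.1 hi).2
        (Finset.mem_Icc.1 hj).1 (Finset.mem_Icc.1 hj).2⟩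
  calc eLpNorm (maxPartialSum φ n) 2 _
      ≤ (((Nat.log 2 n + 1 : ℕ) : ℝ≥0∞) + 1) * eLpNorm (partialSum φ n) 2 _ :=
        hφ.eLpNorm_maxPartialSum_le (Nat.lt_pow_succ_log_self one_lt_two n).le
    _ ≤ ENNReal.ofReal (3 * Real.logb 2 n) * eLpNorm (partialSum φ n) 2 _ := by
        gcongr
        rw [← ENNReal.ofReal_natCast, ← ENNReal.ofReal_one,
          ← ENNReal.ofReal_add (by positivity) zero_le_one]
        refine ENNReal.ofReal_le_ofReal ?_
        push_cast
        linarith [natLog_add_two_le_three_mul_logb hn]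
end

section
/- Let {φ_n} ⊂ L²(0,1) be an orthonormal system, let ω(n) be a sequence of positive numbers increasing to ∞, and let n_1 < n_2 < … be an increasing sequence of indices with ω(n_k) ≥ k for all k. If a sequence of real coefficients {a_j} satisfies ∑_{j=1}^∞ a_j² ω(j) < ∞, then the partial sums ∑_{j=1}^{n_k} a_j φ_j(x) converge for almost every x ∈ (0,1) as k → ∞. -/
/-!
By Riesz–Fischer the partial sums `S_N = ∑_{j<N} a_j φ_j` converge in `L²` to some `f` with
`‖S_N - f‖₂² = ∑_{j ≥ N} a_j²`. Summing over `k`, a coefficient `a_j²` is counted once for every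
`k` with `n_k ≤ j`, and such `k` satisfy `k ≤ ω(n_k) ≤ ω(j)`; hence
`∑_k ‖S_{n_k} - f‖₂² ≤ ∑_j (ω(j) + 1) a_j² < ∞`. By monotone convergence
`∑_k |S_{n_k}(x) - f(x)|² < ∞` for almost every `x`, so `S_{n_k}(x) → f(x)`.
-/

open MeasureTheory Filter Finset

namespace Orthonormal

variable {E ι : Type*} [NormedAddCommGroup E] [InnerProductSpace ℝ E]

theorem norm_sum_smul_sq {v : ι → E} (hv : Orthonormal ℝ v) (l : ι → ℝ) (s : Finset ι) :
    ‖∑ i ∈ s, l i • v i‖ ^ 2 = ∑ i ∈ s, l i ^ 2 := by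
  rw [← real_inner_self_eq_norm_sq, hv.inner_sum]
  simp [sq]

variable [CompleteSpace E]

theorem summable_smul {v : ι → E} (hv : Orthonormal ℝ v) {l : ι → ℝ}
    (hl : Summable fun i => l i ^ 2) : Summable fun i => l i • v i := by
  simpa using hv.orthogonalFamily.summable_iff_norm_sq_summable l |>.2 (by simpa using hl)

theorem norm_tsum_smul_sq {v : ι → E} (hv : Orthonormal ℝ v) {l : ι → ℝ}
    (hl : Summable fun i => l i ^ 2) : ‖∑' i, l i • v i‖ ^ 2 = ∑' i, l i ^ 2 := by
  have hnorm := ((continuous_norm.tendsto _).pow 2).comp (hv.summable_smul hl).hasSum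
  refine tendsto_nhds_unique ?_ hl.hasSum
  simpa only [Function.comp_def, hv.norm_sum_smul_sq] using hnorm

theorem norm_tsum_sub_sum_range_smul_sq {v : ℕ → E} (hv : Orthonormal ℝ v) {l : ℕ → ℝ}
    (hl : Summable fun i => l i ^ 2) (N : ℕ) :
    ‖∑' i, l i • v i - ∑ i ∈ range N, l i • v i‖ ^ 2 = ∑' i, l (i + N) ^ 2 := by
  rw [← (hv.summable_smul hl).sum_add_tsum_nat_add N, add_sub_cancel_left]
  exact (hv.comp _ (add_left_injective N)).norm_tsum_smul_sq ((summable_nat_add_iff N).2 hl)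

end Orthonormal

namespace MeasureTheory

variable {α ι : Type*} [MeasurableSpace α] {μ : Measure α}

theorem L2.norm_sq_eq_integral_sq (f : Lp ℝ 2 μ) : ‖f‖ ^ 2 = ∫ x, f x ^ 2 ∂μ := by
  rw [← real_inner_self_eq_norm_sq, L2.inner_def]
  simp [sq]

theorem orthonormal_toLp [DecidableEq ι] {φ : ι → α → ℝ} (hmem : ∀ i, MemLp (φ i) 2 μ)
    (horth : ∀ i j, ∫ x, φ i x * φ j x ∂μ = if i = j then 1 else 0) :
    Orthonormal ℝ fun i => (hmem i).toLp (φ i) := by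
  refine orthonormal_iff_ite.2 fun i j => ?_
  rw [L2.inner_def, ← horth i j]
  refine integral_congr_ae ?_
  filter_upwards [(hmem i).coeFn_toLp, (hmem j).coeFn_toLp] with x hi hj
  simp [hi, hj, mul_comm]

theorem exists_integral_sq_sum_range_sub_eq {φ : ℕ → α → ℝ} (hmem : ∀ n, MemLp (φ n) 2 μ)
    (horth : ∀ i j, ∫ x, φ i x * φ j x ∂μ = if i = j then 1 else 0) {a : ℕ → ℝ}
    (ha : Summable fun j => a j ^ 2) :
    ∃ f : α → ℝ, ∀ N, Integrable (fun x => (∑ j ∈ range N, a j * φ j x - f x) ^ 2) μ ∧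
      ∫ x, (∑ j ∈ range N, a j * φ j x - f x) ^ 2 ∂μ = ∑' j, a (j + N) ^ 2 := by
  set v := fun n => (hmem n).toLp (φ n)
  have hv : Orthonormal ℝ v := orthonormal_toLp hmem horth
  set F := ∑' j, a j • v j
  refine ⟨F, fun N => ?_⟩
  have hcoe : ⇑(∑ j ∈ range N, a j • v j - F) =ᵐ[μ]
      fun x => ∑ j ∈ range N, a j * φ j x - F x := by
    filter_upwards [Lp.coeFn_sub (∑ j ∈ range N, a j • v j) F,
      Lp.coeFn_fun_finsetSum (range N) (fun j => a j • v j),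
      ae_all_iff.2 fun j => Lp.coeFn_smul (a j) (v j),
      ae_all_iff.2 fun j => (hmem j).coeFn_toLp] with x hsub hsum hsmul hφ
    rw [hsub, Pi.sub_apply, hsum]
    simp [hsmul, hφ, v]
  have hsq : (fun x => ⇑(∑ j ∈ range N, a j • v j - F) x ^ 2) =ᵐ[μ]
      fun x => (∑ j ∈ range N, a j * φ j x - F x) ^ 2 := by
    filter_upwards [hcoe] with x hx
    rw [hx]
  refine ⟨(Lp.memLp _).integrable_sq.congr hsq, ?_⟩
  rw [← integral_congr_ae hsq, ← L2.norm_sq_eq_integral_sq, norm_sub_rev,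
    hv.norm_tsum_sub_sum_range_smul_sq ha]

theorem ae_summable_of_summable_integral [Countable ι] {f : ι → α → ℝ}
    (hf_nonneg : ∀ i, 0 ≤ f i) (hf : ∀ i, Integrable (f i) μ)
    (hsum : Summable fun i => ∫ x, f i x ∂μ) : ∀ᵐ x ∂μ, Summable fun i => f i x := by
  have hnorm (i : ι) : eLpNorm (f i) 1 μ = ENNReal.ofReal (∫ x, f i x ∂μ) := by
    rw [eLpNorm_one_eq_lintegral_enorm,
      ofReal_integral_eq_lintegral_ofReal (hf i) (Eventually.of_forall (hf_nonneg i))]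
    simp [Real.enorm_of_nonneg (hf_nonneg i _)]
  have hfin : ∑' i, eLpNorm (f i) 1 μ ≠ ⊤ := by
    simp_rw [hnorm, ← ENNReal.ofReal_tsum_of_nonneg (fun i => integral_nonneg (hf_nonneg i)) hsum]
    exact ENNReal.ofReal_ne_top
  filter_upwards [summable_norm_of_tsum_eLpNorm_ne_top le_rfl
    (fun i => (hf i).aestronglyMeasurable) hfin] with x hx
  simpa [abs_of_nonneg (hf_nonneg _ x)] using hx

end MeasureTheory

theorem tendsto_of_summable_sq_sub {u : ℕ → ℝ} {L : ℝ} (h : Summable fun k => (u k - L) ^ 2) :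
    Tendsto u atTop (nhds L) := by
  rw [tendsto_iff_norm_sub_tendsto_zero]
  simpa [Function.comp_def, Real.sqrt_sq_eq_abs] using
    (Real.continuous_sqrt.tendsto 0).comp h.tendsto_atTop_zero

theorem tsum_nat_add_eq_tsum_indicator {f : ℕ → ℝ} (hf : Summable f) (N : ℕ) :
    ∑' j, f (j + N) = ∑' j, (Set.Ici N).indicator f j := by
  rw [← (hf.indicator (Set.Ici N)).sum_add_tsum_nat_add N,
    Finset.sum_eq_zero fun i hi => Set.indicator_of_notMem (by simpa using hi) f, zero_add]
  simp

theorem summable_floor_add_one_mul {b ω : ℕ → ℝ} (hb0 : ∀ j, 0 ≤ b j)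
    (hω : ∀ᶠ j in atTop, 1 ≤ ω j) (hb : Summable fun j => b j * ω j) :
    Summable fun j => ((⌊ω j⌋₊ : ℝ) + 1) * b j := by
  refine (hb.mul_left 2).of_norm_bounded_eventually_nat ?_
  filter_upwards [hω] with j hj
  rw [Real.norm_of_nonneg (mul_nonneg (by positivity) (hb0 j))]
  nlinarith [Nat.floor_le (zero_le_one.trans hj), hb0 j]

theorem summable_tsum_nat_add_comp {b ω : ℕ → ℝ} {n : ℕ → ℕ} (hb0 : ∀ j, 0 ≤ b j)
    (hω : Monotone ω) (hn : ∀ k : ℕ, (k : ℝ) ≤ ω (n k))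
    (hb : Summable fun j => ((⌊ω j⌋₊ : ℝ) + 1) * b j) :
    Summable fun k => ∑' j, b (j + n k) := by
  have hbs : Summable b := hb.of_nonneg_of_le hb0 fun j =>
    le_mul_of_one_le_left (hb0 j) (by simp)
  have hcount (K j : ℕ) : (#{k ∈ range K | n k ≤ j} : ℝ) ≤ ⌊ω j⌋₊ + 1 := by
    have hsub : {k ∈ range K | n k ≤ j} ⊆ range (⌊ω j⌋₊ + 1) := fun k hk => by
      simp only [mem_filter] at hk
      exact mem_range.2 (Nat.lt_succ_of_le (Nat.le_floor ((hn k).trans (hω hk.2))))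
    exact_mod_cast (Finset.card_le_card hsub).trans (card_range _).le
  refine summable_of_sum_range_le (c := ∑' j, ((⌊ω j⌋₊ : ℝ) + 1) * b j)
    (fun k => tsum_nonneg fun j => hb0 _) fun K => ?_
  calc ∑ k ∈ range K, ∑' j, b (j + n k)
      = ∑' j, ∑ k ∈ range K, (Set.Ici (n k)).indicator b j := by
        simp_rw [tsum_nat_add_eq_tsum_indicator hbs]
        exact (Summable.tsum_finsetSum fun k _ => hbs.indicator _).symm
    _ = ∑' j, (#{k ∈ range K | n k ≤ j} : ℝ) * b j := by
        simp_rw [Set.indicator_apply, Set.mem_Ici, ← sum_filter, sum_const, nsmul_eq_mul]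
    _ ≤ ∑' j, ((⌊ω j⌋₊ : ℝ) + 1) * b j :=
        Summable.tsum_le_tsum (fun j => mul_le_mul_of_nonneg_right (hcount K j) (hb0 j))
          (hb.of_nonneg_of_le (fun j => mul_nonneg (by positivity) (hb0 j))
            fun j => mul_le_mul_of_nonneg_right (hcount K j) (hb0 j)) hb

theorem kaczmarz_steinhaus_subsequence_convergence_general
    (φ : ℕ → ℝ → ℝ)
    (hmem : ∀ n, MemLp (φ n) 2 (volume.restrict (Set.Ioo (0:ℝ) 1)))
    (horth : ∀ i j, ∫ x in Set.Ioo (0:ℝ) 1, φ i x * φ j x = if i = j then 1 else 0)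
    (ω : ℕ → ℝ) (hωmono : Monotone ω)
    (nk : ℕ → ℕ) (hωnk : ∀ k : ℕ, (k : ℝ) ≤ ω (nk k))
    (a : ℕ → ℝ) (ha : Summable (fun j => a j ^ 2 * ω j)) :
    ∀ᵐ x ∂(volume.restrict (Set.Ioo (0:ℝ) 1)),
      ∃ L : ℝ, Tendsto (fun k => ∑ j ∈ Finset.range (nk k), a j * φ j x)
        atTop (nhds L) := by
  have hω : ∀ᶠ j in atTop, 1 ≤ ω j :=
    eventually_atTop.2 ⟨nk 1, fun j hj => by simpa using (hωnk 1).trans (hωmono hj)⟩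
  have hweighted := summable_floor_add_one_mul (fun j => sq_nonneg (a j)) hω ha
  have hsq : Summable fun j => a j ^ 2 := hweighted.of_nonneg_of_le (fun j => sq_nonneg _)
    fun j => le_mul_of_one_le_left (sq_nonneg _) (by simp)
  obtain ⟨f, hf⟩ := exists_integral_sq_sum_range_sub_eq hmem horth hsq
  have hsum : Summable fun k =>
      ∫ x in Set.Ioo (0:ℝ) 1, (∑ j ∈ range (nk k), a j * φ j x - f x) ^ 2 := by
    simpa only [(hf _).2] using
      summable_tsum_nat_add_comp (fun j => sq_nonneg (a j)) hωmono hωnk hweighted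
  filter_upwards [ae_summable_of_summable_integral (fun k x => sq_nonneg _) (fun k => (hf _).1)
    hsum] with x hx
  exact ⟨f x, tendsto_of_summable_sq_sub hx⟩

/-- **Kaczmarz–Steinhaus lemma.** Let `{φ_n}` be an orthonormal system in `L²(0,1)`,
`ω(n) ↗ ∞` positive, and let `n_0 < n_1 < …` be an increasing sequence of indices with
`ω(n_k) ≥ k`. If `∑ a_j² ω(j) < ∞`, then the partial sums `∑_{j < n_k} a_j φ_j(x)` converge
for a.e. `x ∈ (0,1)` as `k → ∞`. -/
theorem kaczmarz_steinhaus_subsequence_convergence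
    (φ : ℕ → ℝ → ℝ)
    (hmem : ∀ n, MemLp (φ n) 2 (volume.restrict (Set.Ioo (0:ℝ) 1)))
    (horth : ∀ i j, ∫ x in Set.Ioo (0:ℝ) 1, φ i x * φ j x = if i = j then 1 else 0)
    (ω : ℕ → ℝ) (hωpos : ∀ n, 0 < ω n) (hωmono : Monotone ω)
    (hωtop : Tendsto ω atTop atTop)
    (nk : ℕ → ℕ) (hnk : StrictMono nk) (hωnk : ∀ k : ℕ, (k : ℝ) ≤ ω (nk k))
    (a : ℕ → ℝ) (ha : Summable (fun j => a j ^ 2 * ω j)) :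
    ∀ᵐ x ∂(volume.restrict (Set.Ioo (0:ℝ) 1)),
      ∃ L : ℝ, Tendsto (fun k => ∑ j ∈ Finset.range (nk k), a j * φ j x)
        atTop (nhds L) :=
  kaczmarz_steinhaus_subsequence_convergence_general φ hmem horth ω hωmono nk hωnk a ha
end

section
/- There exist absolute constants C, c > 0 such that for every f ∈ L²(0,1) with Fourier–Haar expansion f = ∑_k a_k χ_k in the L²-normalized classical Haar system, defining the maximal function ℳf(x) = sup_{n ≥ 1} |∑_{k=1}^n a_k χ_k(x)| and the square function Sf(x) = (∑_{k=1}^∞ a_k² χ_k(x)²)^{1/2}, one has for all λ > 0 and 0 < ε < 1: |{x ∈ [0,1) : ℳf(x) > λ and Sf(x) < ε λ}| ≤ C · exp(−c/ε²) · |{x ∈ [0,1) : ℳf(x) > λ/2}|. -/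
open MeasureTheory Filter Set

/-- The Haar function of dyadic generation `k ≥ 0` and position `1 ≤ i ≤ 2^k`. -/
noncomputable def haarFun (k i : ℕ) (x : ℝ) : ℝ :=
  if (2 * (i : ℝ) - 2) / 2 ^ (k + 1) ≤ x ∧ x < (2 * (i : ℝ) - 1) / 2 ^ (k + 1) then
    Real.sqrt (2 ^ k)
  else if (2 * (i : ℝ) - 1) / 2 ^ (k + 1) ≤ x ∧ x < (2 * (i : ℝ)) / 2 ^ (k + 1) then
    -Real.sqrt (2 ^ k)
  else 0

/-- The `L²`-normalized classical Haar system `{χ_n}` on `[0,1)`, indexed from `1`: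
`χ_1 ≡ 1` and `χ_n = haarFun k i` for `n = 2^k + i`, `1 ≤ i ≤ 2^k`. -/
noncomputable def haarSystem : ℕ → ℝ → ℝ
  | 0 => fun _ => 0
  | 1 => fun _ => 1
  | (n + 2) => haarFun (Nat.log 2 (n + 1)) ((n + 2) - 2 ^ Nat.log 2 (n + 1))

/-- The Fourier–Haar coefficients of `f`. -/
noncomputable def haarCoeff (f : ℝ → ℝ) (k : ℕ) : ℝ :=
  ∫ x in Set.Ico (0:ℝ) 1, f x * haarSystem k x

/-- The Haar maximal function `ℳf(x) = sup_{n ≥ 1} |∑_{k=1}^n a_k χ_k(x)|`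
(with values in `ℝ≥0∞`). -/
noncomputable def haarMaximal (f : ℝ → ℝ) (x : ℝ) : ENNReal :=
  ⨆ n : ℕ, ENNReal.ofReal |∑ k ∈ Finset.Icc 1 (n + 1), haarCoeff f k * haarSystem k x|

/-- The Haar square function `Sf(x) = (∑_{k=1}^∞ a_k² χ_k(x)²)^{1/2}`
(with values in `ℝ≥0∞`). -/
noncomputable def haarSquare (f : ℝ → ℝ) (x : ℝ) : ENNReal :=
  (∑' k : ℕ, ENNReal.ofReal ((haarCoeff f (k + 1) * haarSystem (k + 1) x) ^ 2)) ^ (1/2 : ℝ)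

/-!
The partial Haar sums `V_k = ∑_{n ≤ 2^k} a_n χ_n` form a martingale on the dyadic tree, constant on
the dyadic intervals of length `2^{-k}`, and every other partial sum equals one of two consecutive
`V_k`; so `ℳf = sup_k |V_k|`, and `Sf` dominates the square function of `(V_k)`. Split
`{ℳf > λ/2}` into the maximal dyadic intervals `I` on which `|V|` first exceeds `λ/2`. A point of
`I` with `ℳf > λ` and `Sf < ελ` sees `V` move by more than `λ/4` after `I`, with quadratic
variation at most `(ελ)²`. Since `cosh t ≤ exp (t²/2)`, `exp (t (V_l - V_m) - t² ⟨V⟩_{m,l} / 2)`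
is a supermartingale, and Doob's maximal inequality on the dyadic tree below `I` bounds the
proportion of such points in `I` by `2 exp (-1 / (32 ε²))`.
-/

open scoped ENNReal

open Function in
theorem measure_le_mul_measure_iUnion {α ι : Type*} [MeasurableSpace α] [Countable ι]
    {μ : Measure α} {A : Set α} {s : ι → Set α} {K : ℝ≥0∞} (hA : A ⊆ ⋃ i, s i)
    (hd : Pairwise (Disjoint on s)) (hs : ∀ i, MeasurableSet (s i))
    (hK : ∀ i, μ (A ∩ s i) ≤ K * μ (s i)) :
    μ A ≤ K * μ (⋃ i, s i) :=
  calc μ A ≤ μ (⋃ i, A ∩ s i) := measure_mono (by rw [← inter_iUnion]; exact subset_inter le_rfl hA)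
    _ ≤ ∑' i, μ (A ∩ s i) := measure_iUnion_le _
    _ ≤ ∑' i, K * μ (s i) := ENNReal.tsum_le_tsum hK
    _ = K * μ (⋃ i, s i) := by rw [ENNReal.tsum_mul_left, measure_iUnion hd hs]

lemma floor_two_pow_mul_div (x : ℝ) {g l : ℕ} (h : g ≤ l) :
    ⌊2 ^ l * x⌋₊ / 2 ^ (l - g) = ⌊2 ^ g * x⌋₊ := by
  rw [← Nat.floor_div_natCast]
  congr 1
  have : (2 : ℝ) ^ l = 2 ^ g * 2 ^ (l - g) := by rw [← pow_add, Nat.add_sub_cancel' h]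
  rw [Nat.cast_pow, Nat.cast_ofNat, this]
  field_simp

lemma floor_two_pow_succ_mul_div_two (x : ℝ) (k : ℕ) :
    ⌊2 ^ (k + 1) * x⌋₊ / 2 = ⌊2 ^ k * x⌋₊ := by
  simpa using floor_two_pow_mul_div x (Nat.le_succ k)

lemma floor_two_pow_mul_lt {x : ℝ} (hx : x ∈ Ico (0 : ℝ) 1) (k : ℕ) : ⌊2 ^ k * x⌋₊ < 2 ^ k := by
  rw [Nat.floor_lt (by have := hx.1; positivity)]
  push_cast
  nlinarith [hx.2, pow_pos (two_pos : (0 : ℝ) < 2) k]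

def dyadicInterval (n j : ℕ) : Set ℝ := Ico (j / 2 ^ n) ((j + 1) / 2 ^ n)

lemma mem_dyadicInterval {n j : ℕ} {x : ℝ} :
    x ∈ dyadicInterval n j ↔ 0 ≤ x ∧ ⌊2 ^ n * x⌋₊ = j := by
  have h2n : (0 : ℝ) < 2 ^ n := by positivity
  simp only [dyadicInterval, mem_Ico, div_le_iff₀ h2n, lt_div_iff₀ h2n]
  constructor
  · rintro ⟨h1, h2⟩
    have hx : 0 ≤ x := by nlinarith [j.cast_nonneg (α := ℝ)]
    exact ⟨hx, (Nat.floor_eq_iff (by positivity)).2 ⟨by linarith, by linarith⟩⟩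
  · rintro ⟨hx, rfl⟩
    have h1 := Nat.floor_le (show 0 ≤ 2 ^ n * x by positivity)
    have h2 := Nat.lt_floor_add_one (2 ^ n * x)
    constructor <;> linarith

lemma mem_dyadicInterval_floor {x : ℝ} (hx : 0 ≤ x) (n : ℕ) :
    x ∈ dyadicInterval n ⌊2 ^ n * x⌋₊ :=
  mem_dyadicInterval.2 ⟨hx, rfl⟩

lemma measurableSet_dyadicInterval (n j : ℕ) : MeasurableSet (dyadicInterval n j) :=
  measurableSet_Ico

lemma volume_dyadicInterval (n j : ℕ) : volume (dyadicInterval n j) = (2 ^ n)⁻¹ := by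
  rw [dyadicInterval, Real.volume_Ico, ← sub_div, add_sub_cancel_left, one_div,
    ENNReal.ofReal_inv_of_pos (by positivity), ENNReal.ofReal_pow zero_le_two, ENNReal.ofReal_ofNat]

lemma dyadicInterval_subset_Ico {m i : ℕ} (hi : i < 2 ^ m) : dyadicInterval m i ⊆ Ico 0 1 := by
  intro x hx
  refine ⟨(mem_dyadicInterval.1 hx).1, lt_of_lt_of_le hx.2 ?_⟩
  rw [div_le_one (by positivity)]
  exact_mod_cast hi

lemma dyadicInterval_subset_union (n j : ℕ) :
    dyadicInterval n j ⊆ dyadicInterval (n + 1) (2 * j) ∪ dyadicInterval (n + 1) (2 * j + 1) := by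
  intro x hx
  obtain ⟨hx0, hj⟩ := mem_dyadicInterval.1 hx
  have := floor_two_pow_succ_mul_div_two x n
  simp only [mem_union, mem_dyadicInterval, hx0, true_and]
  omega

def dyadicHitSet (Z : ℕ → ℕ → ℝ≥0∞) (c : ℝ≥0∞) (n j d : ℕ) : Set ℝ :=
  {x ∈ dyadicInterval n j | ∃ l, n ≤ l ∧ l < n + d ∧ c ≤ Z l ⌊2 ^ l * x⌋₊}

section Doob

variable {Z : ℕ → ℕ → ℝ≥0∞} {c : ℝ≥0∞} {n : ℕ}

lemma dyadicHitSet_succ_subset {j : ℕ} (hc : ¬c ≤ Z n j) (d : ℕ) :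
    dyadicHitSet Z c n j (d + 1) ⊆
      dyadicHitSet Z c (n + 1) (2 * j) d ∪ dyadicHitSet Z c (n + 1) (2 * j + 1) d := by
  rintro x ⟨hx, l, hnl, hld, hcl⟩
  have hl : l ≠ n := by
    rintro rfl
    exact hc ((mem_dyadicInterval.1 hx).2 ▸ hcl)
  have hl' : ∃ l, n + 1 ≤ l ∧ l < n + 1 + d ∧ c ≤ Z l ⌊2 ^ l * x⌋₊ :=
    ⟨l, by omega, by omega, hcl⟩
  rcases dyadicInterval_subset_union n j hx with h | h
  exacts [Or.inl ⟨h, hl'⟩, Or.inr ⟨h, hl'⟩]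

lemma dyadic_maximal_ineq_bounded
    (hZ : ∀ k, n ≤ k → ∀ j, Z (k + 1) (2 * j) + Z (k + 1) (2 * j + 1) ≤ 2 * Z k j) (d j : ℕ) :
    c * volume (dyadicHitSet Z c n j d) ≤ Z n j * volume (dyadicInterval n j) := by
  induction d generalizing n j with
  | zero =>
    refine (mul_le_mul_right (measure_mono (t := ∅) ?_) c).trans (by simp)
    rintro x ⟨-, l, hnl, hln, -⟩
    omega
  | succ d ih =>
    by_cases hc : c ≤ Z n j
    · exact mul_le_mul' hc (measure_mono (sep_subset _ _))
    have hZ' : ∀ k, n + 1 ≤ k → ∀ j, Z (k + 1) (2 * j) + Z (k + 1) (2 * j + 1) ≤ 2 * Z k j :=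
      fun k hk => hZ k (by omega)
    calc _ ≤ c * (volume (dyadicHitSet Z c (n + 1) (2 * j) d) +
            volume (dyadicHitSet Z c (n + 1) (2 * j + 1) d)) :=
          mul_le_mul_right
            ((measure_mono (dyadicHitSet_succ_subset hc d)).trans (measure_union_le _ _)) c
      _ ≤ Z (n + 1) (2 * j) * volume (dyadicInterval (n + 1) (2 * j)) +
            Z (n + 1) (2 * j + 1) * volume (dyadicInterval (n + 1) (2 * j + 1)) := by
          rw [mul_add]
          exact add_le_add (ih hZ' _) (ih hZ' _)
      _ ≤ 2 * Z n j * (2 ^ (n + 1))⁻¹ := by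
          simp only [volume_dyadicInterval, ← add_mul]
          exact mul_le_mul_left (hZ n le_rfl j) _
      _ = Z n j * volume (dyadicInterval n j) := by
          rw [volume_dyadicInterval, pow_succ, ENNReal.mul_inv (by simp) (by simp),
            mul_comm (2 : ℝ≥0∞), mul_assoc, mul_left_comm 2,
            ENNReal.mul_inv_cancel two_ne_zero ENNReal.ofNat_ne_top, mul_one]

/-- Doob's maximal inequality for a supermartingale on the dyadic tree below `(n, j)`. -/
theorem dyadic_maximal_ineq
    (hZ : ∀ k, n ≤ k → ∀ j, Z (k + 1) (2 * j) + Z (k + 1) (2 * j + 1) ≤ 2 * Z k j) (j : ℕ) :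
    c * volume {x ∈ dyadicInterval n j | ∃ l, n ≤ l ∧ c ≤ Z l ⌊2 ^ l * x⌋₊} ≤
      Z n j * volume (dyadicInterval n j) := by
  have hunion : {x ∈ dyadicInterval n j | ∃ l, n ≤ l ∧ c ≤ Z l ⌊2 ^ l * x⌋₊} =
      ⋃ d, dyadicHitSet Z c n j d := by
    ext x
    simp only [dyadicHitSet, mem_ofPred_eq, mem_iUnion]
    constructor
    · rintro ⟨hx, l, hnl, hcl⟩
      exact ⟨l + 1, hx, l, hnl, by omega, hcl⟩
    · rintro ⟨d, hx, l, hnl, -, hcl⟩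
      exact ⟨hx, l, hnl, hcl⟩
  have hmono : Monotone (dyadicHitSet Z c n j) := by
    intro d d' hd x ⟨hx, l, hnl, hld, hcl⟩
    exact ⟨hx, l, hnl, by omega, hcl⟩
  rw [hunion, hmono.measure_iUnion, ENNReal.mul_iSup]
  exact iSup_le fun d => dyadic_maximal_ineq_bounded hZ d j

end Doob

lemma exp_sub_sq_half_add_exp_neg_sub_sq_half_le_two (y : ℝ) :
    Real.exp (y - y ^ 2 / 2) + Real.exp (-y - (-y) ^ 2 / 2) ≤ 2 := by
  have hcosh := Real.cosh_le_exp_half_sq y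
  rw [Real.cosh_eq, div_le_iff₀ two_pos] at hcosh
  calc Real.exp (y - y ^ 2 / 2) + Real.exp (-y - (-y) ^ 2 / 2)
      = (Real.exp y + Real.exp (-y)) * Real.exp (-(y ^ 2 / 2)) := by
        rw [add_mul, ← Real.exp_add, ← Real.exp_add, neg_sq]; ring_nf
    _ ≤ Real.exp (y ^ 2 / 2) * 2 * Real.exp (-(y ^ 2 / 2)) := by gcongr
    _ = 2 := by rw [mul_right_comm, ← Real.exp_add, add_neg_cancel, Real.exp_zero, one_mul]

lemma sum_Ico_mul_sub_sq_half (D : ℕ → ℝ) (t : ℝ) {m l : ℕ} (hml : m ≤ l) :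
    ∑ g ∈ Finset.Ico m l, (t * (D (g + 1) - D g) - (t * (D (g + 1) - D g)) ^ 2 / 2) =
      t * (D l - D m) - t ^ 2 / 2 * ∑ g ∈ Finset.Ico m l, (D (g + 1) - D g) ^ 2 := by
  rw [Finset.sum_sub_distrib, ← Finset.mul_sum, Finset.sum_Ico_sub D hml, Finset.mul_sum]
  congr 1
  exact Finset.sum_congr rfl fun g _ => by ring

lemma sq_div_two_mul_sq_le {a b u q : ℝ} (ha : 0 < a) (hb : 0 < b) (hu : a < u) (hq : q ≤ b ^ 2) :
    a ^ 2 / (2 * b ^ 2) ≤ a / b ^ 2 * u - (a / b ^ 2) ^ 2 / 2 * q := by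
  have hb2 : 0 < b ^ 2 := by positivity
  have h1 : a / b ^ 2 * a ≤ a / b ^ 2 * u := by gcongr
  have h2 : (a / b ^ 2) ^ 2 / 2 * q ≤ (a / b ^ 2) ^ 2 / 2 * b ^ 2 := by gcongr
  have h3 : a / b ^ 2 * a - (a / b ^ 2) ^ 2 / 2 * b ^ 2 = a ^ 2 / (2 * b ^ 2) := by
    field_simp
    ring
  linarith

def IsDyadicMartingale (V : ℕ → ℕ → ℝ) : Prop :=
  ∀ n j, V (n + 1) (2 * j) + V (n + 1) (2 * j + 1) = 2 * V n j

noncomputable def dyadicEval (V : ℕ → ℕ → ℝ) (k : ℕ) (x : ℝ) : ℝ := V k ⌊2 ^ k * x⌋₊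

/-- `exp (t (V_n - V_m) - t² ⟨V⟩_{m,n} / 2)` along the branch ending at the node `(n, j)`, built
multiplicatively. -/
noncomputable def expSupermartingale (V : ℕ → ℕ → ℝ) (m : ℕ) (t : ℝ) : ℕ → ℕ → ℝ≥0∞
  | 0, _ => 1
  | n + 1, j =>
    if n < m then 1 else
      expSupermartingale V m t n (j / 2) *
        ENNReal.ofReal (Real.exp (t * (V (n + 1) j - V n (j / 2)) -
          (t * (V (n + 1) j - V n (j / 2))) ^ 2 / 2))

section DyadicMartingale

variable {V : ℕ → ℕ → ℝ} {m : ℕ} {t : ℝ}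

lemma expSupermartingale_self (V : ℕ → ℕ → ℝ) (m : ℕ) (t : ℝ) (j : ℕ) :
    expSupermartingale V m t m j = 1 := by
  cases m with
  | zero => rfl
  | succ m => simp [expSupermartingale]

lemma IsDyadicMartingale.expSupermartingale_add_le (hV : IsDyadicMartingale V) {n : ℕ}
    (hmn : m ≤ n) (j : ℕ) :
    expSupermartingale V m t (n + 1) (2 * j) + expSupermartingale V m t (n + 1) (2 * j + 1) ≤
      2 * expSupermartingale V m t n j := by
  have hodd : V (n + 1) (2 * j + 1) - V n j = -(V (n + 1) (2 * j) - V n j) := by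
    linarith [hV n j]
  simp only [expSupermartingale, if_neg (not_lt.2 hmn),
    show 2 * j / 2 = j by omega, show (2 * j + 1) / 2 = j by omega, hodd, mul_neg]
  rw [← mul_add, mul_comm, ← ENNReal.ofReal_add (Real.exp_nonneg _) (Real.exp_nonneg _)]
  gcongr
  exact (ENNReal.ofReal_le_ofReal (exp_sub_sq_half_add_exp_neg_sub_sq_half_le_two _)).trans
    (ENNReal.ofReal_ofNat 2).le

lemma expSupermartingale_floor (V : ℕ → ℕ → ℝ) (m : ℕ) (t x : ℝ) (l : ℕ) :
    expSupermartingale V m t l ⌊2 ^ l * x⌋₊ =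
      ENNReal.ofReal (Real.exp (∑ g ∈ Finset.Ico m l,
        (t * (dyadicEval V (g + 1) x - dyadicEval V g x) -
          (t * (dyadicEval V (g + 1) x - dyadicEval V g x)) ^ 2 / 2))) := by
  induction l with
  | zero => simp [expSupermartingale]
  | succ l ih =>
    by_cases hlm : l < m
    · simp [expSupermartingale, hlm]
    · rw [expSupermartingale, if_neg hlm, floor_two_pow_succ_mul_div_two, ih,
        Finset.sum_Ico_succ_top (not_lt.1 hlm), Real.exp_add,
        ENNReal.ofReal_mul (Real.exp_nonneg _)]
      rfl

lemma ofReal_exp_le_expSupermartingale_add {a b : ℝ} (ha : 0 < a) (hb : 0 < b) {x : ℝ} {l : ℕ}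
    (hml : m ≤ l) (hlt : a < |dyadicEval V l x - dyadicEval V m x|)
    (hq : ∑ g ∈ Finset.Ico m l, (dyadicEval V (g + 1) x - dyadicEval V g x) ^ 2 ≤ b ^ 2) :
    ENNReal.ofReal (Real.exp (a ^ 2 / (2 * b ^ 2))) ≤
      expSupermartingale V m (a / b ^ 2) l ⌊2 ^ l * x⌋₊ +
        expSupermartingale V m (-(a / b ^ 2)) l ⌊2 ^ l * x⌋₊ := by
  simp only [expSupermartingale_floor, sum_Ico_mul_sub_sq_half (dyadicEval V · x) _ hml]
  rcases lt_abs.1 hlt with h | h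
  · refine le_add_right (ENNReal.ofReal_le_ofReal (Real.exp_le_exp.2 ?_))
    exact sq_div_two_mul_sq_le ha hb h hq
  · refine le_add_left (ENNReal.ofReal_le_ofReal (Real.exp_le_exp.2 ?_))
    convert sq_div_two_mul_sq_le ha hb h hq using 1
    ring

/-- Azuma's inequality on the dyadic tree below `(m, i)`. -/
theorem IsDyadicMartingale.volume_exists_lt_abs_sub_le (hV : IsDyadicMartingale V) {a b : ℝ}
    (ha : 0 < a) (hb : 0 < b) (m i : ℕ) :
    volume {x ∈ dyadicInterval m i | ∃ l, m ≤ l ∧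
        a < |dyadicEval V l x - dyadicEval V m x| ∧
        ∑ g ∈ Finset.Ico m l, (dyadicEval V (g + 1) x - dyadicEval V g x) ^ 2 ≤ b ^ 2} ≤
      ENNReal.ofReal (2 * Real.exp (-(a ^ 2 / (2 * b ^ 2)))) * volume (dyadicInterval m i) := by
  -- `t = a / b²` maximises `t a - t² b² / 2`
  set Z : ℕ → ℕ → ℝ≥0∞ := fun l j =>
    expSupermartingale V m (a / b ^ 2) l j + expSupermartingale V m (-(a / b ^ 2)) l j
  set c := ENNReal.ofReal (Real.exp (a ^ 2 / (2 * b ^ 2)))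
  have hZ : ∀ k, m ≤ k → ∀ j, Z (k + 1) (2 * j) + Z (k + 1) (2 * j + 1) ≤ 2 * Z k j :=
    fun k hk j => by
      rw [add_add_add_comm, mul_add]
      exact add_le_add (hV.expSupermartingale_add_le hk j) (hV.expSupermartingale_add_le hk j)
  have hsub : {x ∈ dyadicInterval m i | ∃ l, m ≤ l ∧
        a < |dyadicEval V l x - dyadicEval V m x| ∧
        ∑ g ∈ Finset.Ico m l, (dyadicEval V (g + 1) x - dyadicEval V g x) ^ 2 ≤ b ^ 2} ⊆
      {x ∈ dyadicInterval m i | ∃ l, m ≤ l ∧ c ≤ Z l ⌊2 ^ l * x⌋₊} := by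
    rintro x ⟨hx, l, hml, hlt, hq⟩
    exact ⟨hx, l, hml, ofReal_exp_le_expSupermartingale_add ha hb hml hlt hq⟩
  have hdoob := dyadic_maximal_ineq (c := c) hZ i
  simp only [Z, expSupermartingale_self, one_add_one_eq_two] at hdoob
  have hc : ENNReal.ofReal (Real.exp (-(a ^ 2 / (2 * b ^ 2)))) * c = 1 := by
    rw [← ENNReal.ofReal_mul (Real.exp_nonneg _), ← Real.exp_add, neg_add_cancel, Real.exp_zero,
      ENNReal.ofReal_one]
  calc _ ≤ volume {x ∈ dyadicInterval m i | ∃ l, m ≤ l ∧ c ≤ Z l ⌊2 ^ l * x⌋₊} := measure_mono hsub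
    _ = ENNReal.ofReal (Real.exp (-(a ^ 2 / (2 * b ^ 2)))) *
          (c * volume {x ∈ dyadicInterval m i | ∃ l, m ≤ l ∧ c ≤ Z l ⌊2 ^ l * x⌋₊}) := by
        rw [← mul_assoc, hc, one_mul]
    _ ≤ ENNReal.ofReal (Real.exp (-(a ^ 2 / (2 * b ^ 2)))) * (2 * volume (dyadicInterval m i)) := by
        gcongr
    _ = _ := by
        rw [ENNReal.ofReal_mul zero_le_two, ENNReal.ofReal_ofNat]
        ring

end DyadicMartingale

noncomputable def dyadicMaximal (V : ℕ → ℕ → ℝ) (x : ℝ) : ℝ≥0∞ :=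
  ⨆ k, ENNReal.ofReal |dyadicEval V k x|

noncomputable def dyadicSqSum (V : ℕ → ℕ → ℝ) (N : ℕ) (x : ℝ) : ℝ :=
  dyadicEval V 0 x ^ 2 + ∑ g ∈ Finset.range N, (dyadicEval V (g + 1) x - dyadicEval V g x) ^ 2

/-- `(m, i)` is a maximal dyadic interval on which `|V|` exceeds `s`. -/
def IsStoppingInterval (V : ℕ → ℕ → ℝ) (s : ℝ) (m i : ℕ) : Prop :=
  i < 2 ^ m ∧ ∀ x ∈ dyadicInterval m i, s < |dyadicEval V m x| ∧ ∀ l < m, |dyadicEval V l x| ≤ s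

section GoodLambda

variable {V : ℕ → ℕ → ℝ} {s : ℝ}

lemma lt_dyadicMaximal_iff (hs : 0 ≤ s) {x : ℝ} :
    ENNReal.ofReal s < dyadicMaximal V x ↔ ∃ k, s < |dyadicEval V k x| := by
  simp only [dyadicMaximal, lt_iSup_iff, ENNReal.ofReal_lt_ofReal_iff_of_nonneg hs]

lemma sum_sq_le_dyadicSqSum {t : Finset ℕ} {N : ℕ} (ht : t ⊆ Finset.range N) (x : ℝ) :
    ∑ g ∈ t, (dyadicEval V (g + 1) x - dyadicEval V g x) ^ 2 ≤ dyadicSqSum V N x :=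
  (Finset.sum_le_sum_of_subset_of_nonneg ht fun _ _ _ => sq_nonneg _).trans
    (le_add_of_nonneg_left (sq_nonneg _))

theorem IsDyadicMartingale.volume_goodLambda_on_dyadicInterval_le (hV : IsDyadicMartingale V)
    {a b lam : ℝ} (hs : 0 ≤ s) (ha : 0 < a) (hb : 0 < b) (hlam : s + b + a ≤ lam) {m i : ℕ}
    (hstop : ∀ x ∈ dyadicInterval m i, ∀ l < m, |dyadicEval V l x| ≤ s) :
    volume {x ∈ dyadicInterval m i |
        ENNReal.ofReal lam < dyadicMaximal V x ∧ ∀ N, dyadicSqSum V N x ≤ b ^ 2} ≤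
      ENNReal.ofReal (2 * Real.exp (-(a ^ 2 / (2 * b ^ 2)))) * volume (dyadicInterval m i) := by
  refine le_trans (measure_mono ?_) (hV.volume_exists_lt_abs_sub_le ha hb m i)
  rintro x ⟨hx, hM, hS⟩
  obtain ⟨l, hl⟩ := (lt_dyadicMaximal_iff (by linarith)).1 hM
  have hml : m ≤ l := not_lt.1 fun hlm => by linarith [hstop x hx l hlm]
  have hm : |dyadicEval V m x| ≤ s + b := by
    cases m with
    | zero =>
      have : dyadicEval V 0 x ^ 2 ≤ b ^ 2 := (le_add_of_nonneg_right (by positivity)).trans (hS 0)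
      linarith [abs_le_of_sq_le_sq this hb.le]
    | succ m =>
      have hinc : (dyadicEval V (m + 1) x - dyadicEval V m x) ^ 2 ≤ b ^ 2 := by
        simpa using (sum_sq_le_dyadicSqSum (t := {m}) (by simp) x).trans (hS (m + 1))
      linarith [abs_sub_abs_le_abs_sub (dyadicEval V (m + 1) x) (dyadicEval V m x),
        hstop x hx m (Nat.lt_succ_self m), abs_le_of_sq_le_sq hinc hb.le]
  have hIco : Finset.Ico m l ⊆ Finset.range l := fun g hg =>
    Finset.mem_range.2 (Finset.mem_Ico.1 hg).2
  refine ⟨hx, l, hml, ?_, (sum_sq_le_dyadicSqSum hIco x).trans (hS l)⟩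
  linarith [abs_sub_abs_le_abs_sub (dyadicEval V l x) (dyadicEval V m x)]

lemma exists_isStoppingInterval (hs : 0 ≤ s) {x : ℝ} (hx : x ∈ Ico (0 : ℝ) 1)
    (hM : ENNReal.ofReal s < dyadicMaximal V x) : ∃ m, IsStoppingInterval V s m ⌊2 ^ m * x⌋₊ := by
  classical
  have hex := (lt_dyadicMaximal_iff hs).1 hM
  refine ⟨Nat.find hex, floor_two_pow_mul_lt hx _, fun y hy => ?_⟩
  have hxy : ∀ l ≤ Nat.find hex, dyadicEval V l y = dyadicEval V l x := fun l hl => by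
    rw [dyadicEval, dyadicEval, ← floor_two_pow_mul_div y hl, ← floor_two_pow_mul_div x hl,
      (mem_dyadicInterval.1 hy).2]
  exact ⟨hxy _ le_rfl ▸ Nat.find_spec hex,
    fun l hl => (hxy l hl.le).symm ▸ not_lt.1 (Nat.find_min hex hl)⟩

lemma IsStoppingInterval.disjoint {p q : ℕ × ℕ} (hp : IsStoppingInterval V s p.1 p.2)
    (hq : IsStoppingInterval V s q.1 q.2) (hpq : p ≠ q) :
    Disjoint (dyadicInterval p.1 p.2) (dyadicInterval q.1 q.2) := by
  rw [Set.disjoint_left]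
  intro x hxp hxq
  rcases lt_trichotomy p.1 q.1 with h | h | h
  · linarith [(hp.2 x hxp).1, (hq.2 x hxq).2 p.1 h]
  · refine hpq (Prod.ext h ?_)
    rw [← (mem_dyadicInterval.1 hxp).2, ← (mem_dyadicInterval.1 hxq).2, h]
  · linarith [(hq.2 x hxq).1, (hp.2 x hxp).2 q.1 h]

theorem volume_le_mul_volume_of_isStoppingInterval (hs : 0 ≤ s) {A : Set ℝ} {K : ℝ≥0∞}
    (hA : A ⊆ {x ∈ Ico (0 : ℝ) 1 | ENNReal.ofReal s < dyadicMaximal V x})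
    (hK : ∀ m i, IsStoppingInterval V s m i →
      volume (A ∩ dyadicInterval m i) ≤ K * volume (dyadicInterval m i)) :
    volume A ≤ K * volume {x ∈ Ico (0 : ℝ) 1 | ENNReal.ofReal s < dyadicMaximal V x} := by
  let ι := {p : ℕ × ℕ // IsStoppingInterval V s p.1 p.2}
  calc volume A ≤ K * volume (⋃ p : ι, dyadicInterval p.1.1 p.1.2) := by
        refine measure_le_mul_measure_iUnion ?_
          (fun p q hpq => p.2.disjoint q.2 (Subtype.coe_injective.ne hpq))
          (fun p => measurableSet_dyadicInterval _ _) (fun p => hK _ _ p.2)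
        intro x hx
        obtain ⟨m, hm⟩ := exists_isStoppingInterval hs (hA hx).1 (hA hx).2
        exact mem_iUnion.2 ⟨⟨(m, _), hm⟩, mem_dyadicInterval_floor (hA hx).1.1 m⟩
    _ ≤ _ := by
        gcongr
        refine iUnion_subset fun p x hx => ⟨dyadicInterval_subset_Ico p.2.1 hx, ?_⟩
        exact (lt_dyadicMaximal_iff hs).2 ⟨_, (p.2.2 x hx).1⟩

lemma one_le_two_mul_exp_neg_div_sq {ε : ℝ} (hε : 1 / 4 < ε) :
    1 ≤ 2 * Real.exp (-(1 / 32) / ε ^ 2) := by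
  have : (1 / 32) / ε ^ 2 ≤ 1 / 2 := by
    rw [div_le_iff₀ (by positivity)]
    nlinarith
  linarith [Real.add_one_le_exp (-(1 / 32) / ε ^ 2), neg_div (ε ^ 2) (1 / 32 : ℝ)]

theorem IsDyadicMartingale.volume_goodLambda_le (hV : IsDyadicMartingale V) {lam ε : ℝ}
    (hlam : 0 < lam) (hε : 0 < ε) :
    volume {x ∈ Ico (0 : ℝ) 1 | ENNReal.ofReal lam < dyadicMaximal V x ∧
        ∀ N, dyadicSqSum V N x ≤ (ε * lam) ^ 2} ≤
      ENNReal.ofReal (2 * Real.exp (-(1 / 32) / ε ^ 2)) *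
        volume {x ∈ Ico (0 : ℝ) 1 | ENNReal.ofReal (lam / 2) < dyadicMaximal V x} := by
  have hbad : {x ∈ Ico (0 : ℝ) 1 | ENNReal.ofReal lam < dyadicMaximal V x ∧
      ∀ N, dyadicSqSum V N x ≤ (ε * lam) ^ 2} ⊆
      {x ∈ Ico (0 : ℝ) 1 | ENNReal.ofReal (lam / 2) < dyadicMaximal V x} :=
    fun x ⟨hx, hM, _⟩ => ⟨hx, lt_of_le_of_lt (ENNReal.ofReal_le_ofReal (by linarith)) hM⟩
  rcases le_or_gt ε (1 / 4) with hε4 | hε4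
  · refine volume_le_mul_volume_of_isStoppingInterval (by positivity) hbad fun m i hmi => ?_
    have hexp : -(1 / 32) / ε ^ 2 = -((lam / 4) ^ 2 / (2 * (ε * lam) ^ 2)) := by
      field_simp
      ring
    rw [hexp]
    refine (measure_mono ?_).trans <| hV.volume_goodLambda_on_dyadicInterval_le (lam := lam)
      (a := lam / 4) (b := ε * lam) (by positivity) (by positivity) (by positivity) (by nlinarith)
      fun x hx => (hmi.2 x hx).2
    rintro x ⟨⟨-, hx⟩, hxm⟩
    exact ⟨hxm, hx⟩
  · calc _ ≤ 1 * volume {x ∈ Ico (0 : ℝ) 1 | ENNReal.ofReal (lam / 2) < dyadicMaximal V x} := by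
          rw [one_mul]
          exact measure_mono hbad
      _ ≤ _ := by
          gcongr
          exact ENNReal.one_le_ofReal.2 (one_le_two_mul_exp_neg_div_sq hε4)

end GoodLambda

lemma sum_Icc_one_eq_add_sum_Ioc {M : Type*} [AddCommMonoid M] (g : ℕ → M) {n n' : ℕ} (h : n ≤ n') :
    ∑ j ∈ Finset.Icc 1 n', g j = ∑ j ∈ Finset.Icc 1 n, g j + ∑ j ∈ Finset.Ioc n n', g j := by
  have hIcc : ∀ m, Finset.Icc 1 m = Finset.Ioc 0 m := fun _ => rfl
  rw [hIcc, hIcc, Finset.sum_Ioc_consecutive _ (Nat.zero_le n) h]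

/-- The value of `∑_{n ≤ 2^k} a_n χ_n` on `dyadicInterval k j`. -/
noncomputable def haarMartingale (f : ℝ → ℝ) : ℕ → ℕ → ℝ
  | 0, _ => haarCoeff f 1
  | k + 1, j => haarMartingale f k (j / 2) +
      (if j % 2 = 0 then 1 else -1) * (haarCoeff f (2 ^ k + j / 2 + 1) * Real.sqrt (2 ^ k))

noncomputable def haarPartialSum (f : ℝ → ℝ) (n : ℕ) (x : ℝ) : ℝ :=
  ∑ k ∈ Finset.Icc 1 n, haarCoeff f k * haarSystem k x

section Haar

variable (f : ℝ → ℝ) {x : ℝ}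

lemma isDyadicMartingale_haarMartingale : IsDyadicMartingale (haarMartingale f) := by
  intro n j
  simp only [haarMartingale, show 2 * j / 2 = j by omega, show (2 * j + 1) / 2 = j by omega,
    Nat.mul_mod_right, Nat.mul_add_mod_self_left]
  norm_num
  ring

lemma haarMartingale_increment (k : ℕ) (x : ℝ) :
    dyadicEval (haarMartingale f) (k + 1) x - dyadicEval (haarMartingale f) k x =
      (if ⌊2 ^ (k + 1) * x⌋₊ % 2 = 0 then 1 else -1) *
        (haarCoeff f (2 ^ k + ⌊2 ^ k * x⌋₊ + 1) * Real.sqrt (2 ^ k)) := by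
  simp only [dyadicEval, haarMartingale, floor_two_pow_succ_mul_div_two, add_sub_cancel_left]

lemma haarSystem_two_pow_add {k i : ℕ} (h1 : 1 ≤ i) (h2 : i ≤ 2 ^ k) :
    haarSystem (2 ^ k + i) = haarFun k i := by
  obtain ⟨n, hn⟩ : ∃ n, 2 ^ k + i = n + 2 := ⟨2 ^ k + i - 2, by have := k.one_le_two_pow; omega⟩
  have hlog : Nat.log 2 (n + 1) = k :=
    Nat.log_eq_of_pow_le_of_lt_pow (by omega) (by rw [pow_succ]; omega)
  rw [hn, haarSystem, hlog, show n + 2 - 2 ^ k = i by omega]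

lemma haarFun_eq_ite (hx : 0 ≤ x) (k i : ℕ) :
    haarFun k i x =
      if ⌊2 ^ (k + 1) * x⌋₊ + 2 = 2 * i then Real.sqrt (2 ^ k)
      else if ⌊2 ^ (k + 1) * x⌋₊ + 1 = 2 * i then -Real.sqrt (2 ^ k) else 0 := by
  have key : ∀ z : ℤ, ((z : ℝ) / 2 ^ (k + 1) ≤ x ∧ x < (z + 1) / 2 ^ (k + 1)) ↔
      (⌊2 ^ (k + 1) * x⌋₊ : ℤ) = z := by
    intro z
    rw [Int.natCast_floor_eq_floor (by positivity), Int.floor_eq_iff,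
      div_le_iff₀ (by positivity), lt_div_iff₀ (by positivity), mul_comm x]
  have h1 := key (2 * i - 2)
  have h2 := key (2 * i - 1)
  push_cast at h1 h2
  rw [show (2 * (i : ℝ) - 2 + 1) = 2 * i - 1 by ring] at h1
  rw [show (2 * (i : ℝ) - 1 + 1) = 2 * i by ring] at h2
  simp only [haarFun, h1, h2]
  congr 1
  · exact propext (by omega)
  · congr 1
    exact propext (by omega)

lemma haarCoeff_mul_haarSystem (hx : 0 ≤ x) {k j : ℕ} (hj1 : 2 ^ k < j) (hj2 : j ≤ 2 ^ (k + 1)) :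
    haarCoeff f j * haarSystem j x =
      if j = 2 ^ k + ⌊2 ^ k * x⌋₊ + 1 then
        dyadicEval (haarMartingale f) (k + 1) x - dyadicEval (haarMartingale f) k x
      else 0 := by
  obtain ⟨i, rfl⟩ : ∃ i, j = 2 ^ k + i := ⟨j - 2 ^ k, by omega⟩
  rw [pow_succ] at hj2
  rw [haarSystem_two_pow_add (by omega) (by omega), haarFun_eq_ite hx, haarMartingale_increment,
    ← floor_two_pow_succ_mul_div_two x k]
  set J := ⌊2 ^ (k + 1) * x⌋₊
  by_cases hi : i = J / 2 + 1
  · subst hi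
    rw [if_pos (add_assoc _ _ _).symm, add_assoc]
    split_ifs <;> first | omega | ring
  · rw [if_neg (by omega), if_neg (by omega), if_neg (by omega), mul_zero]

lemma sum_Ioc_haar_comp (φ : ℝ → ℝ) (hφ : φ 0 = 0) (hx : 0 ≤ x) {k n : ℕ}
    (hn : n ≤ 2 ^ (k + 1)) :
    ∑ j ∈ Finset.Ioc (2 ^ k) n, φ (haarCoeff f j * haarSystem j x) =
      if 2 ^ k + ⌊2 ^ k * x⌋₊ + 1 ≤ n then
        φ (dyadicEval (haarMartingale f) (k + 1) x - dyadicEval (haarMartingale f) k x)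
      else 0 := by
  rw [Finset.sum_congr rfl fun j hj => by
    rw [haarCoeff_mul_haarSystem f hx (Finset.mem_Ioc.1 hj).1
      ((Finset.mem_Ioc.1 hj).2.trans hn), apply_ite φ, hφ]]
  rw [Finset.sum_ite_eq']
  exact if_congr (by rw [Finset.mem_Ioc]; omega) rfl rfl

lemma sum_Ioc_haar (hx : 0 ≤ x) {k n : ℕ} (hn : n ≤ 2 ^ (k + 1)) :
    ∑ j ∈ Finset.Ioc (2 ^ k) n, haarCoeff f j * haarSystem j x =
      if 2 ^ k + ⌊2 ^ k * x⌋₊ + 1 ≤ n then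
        dyadicEval (haarMartingale f) (k + 1) x - dyadicEval (haarMartingale f) k x
      else 0 :=
  sum_Ioc_haar_comp f id rfl hx hn

lemma haarPartialSum_two_pow (hx : x ∈ Ico (0 : ℝ) 1) (k : ℕ) :
    haarPartialSum f (2 ^ k) x = dyadicEval (haarMartingale f) k x := by
  induction k with
  | zero => simp [haarPartialSum, haarSystem, dyadicEval, haarMartingale]
  | succ k ih =>
    have hlt := floor_two_pow_mul_lt hx k
    rw [haarPartialSum, sum_Icc_one_eq_add_sum_Ioc _ (Nat.pow_le_pow_right two_pos k.le_succ),
      ← haarPartialSum, ih, sum_Ioc_haar f hx.1 le_rfl, if_pos (by rw [pow_succ]; omega),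
      add_sub_cancel]

lemma haarPartialSum_eq_or (hx : x ∈ Ico (0 : ℝ) 1) {k n : ℕ} (h1 : 2 ^ k ≤ n)
    (h2 : n ≤ 2 ^ (k + 1)) :
    haarPartialSum f n x = dyadicEval (haarMartingale f) k x ∨
      haarPartialSum f n x = dyadicEval (haarMartingale f) (k + 1) x := by
  rw [haarPartialSum, sum_Icc_one_eq_add_sum_Ioc _ h1, ← haarPartialSum,
    haarPartialSum_two_pow f hx, sum_Ioc_haar f hx.1 h2]
  split_ifs
  · exact Or.inr (add_sub_cancel _ _)
  · exact Or.inl (add_zero _)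

lemma haarMaximal_eq_dyadicMaximal (hx : x ∈ Ico (0 : ℝ) 1) :
    haarMaximal f x = dyadicMaximal (haarMartingale f) x := by
  apply le_antisymm
  · refine iSup_le fun n => ?_
    set k := Nat.log 2 (n + 1)
    change ENNReal.ofReal |haarPartialSum f (n + 1) x| ≤ _
    rcases haarPartialSum_eq_or f hx (Nat.pow_log_le_self 2 (by omega : n + 1 ≠ 0))
      (Nat.lt_pow_succ_log_self one_lt_two (n + 1)).le with h | h <;> rw [h]
    · exact le_iSup (fun k => ENNReal.ofReal |dyadicEval (haarMartingale f) k x|) k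
    · exact le_iSup (fun k => ENNReal.ofReal |dyadicEval (haarMartingale f) k x|) (k + 1)
  · refine iSup_le fun k => ?_
    rw [← haarPartialSum_two_pow f hx, ← Nat.sub_add_cancel k.one_le_two_pow]
    exact le_iSup (fun n => ENNReal.ofReal |haarPartialSum f (n + 1) x|) (2 ^ k - 1)

lemma sum_Icc_sq_haar (hx : x ∈ Ico (0 : ℝ) 1) (N : ℕ) :
    ∑ j ∈ Finset.Icc 1 (2 ^ N), (haarCoeff f j * haarSystem j x) ^ 2 =
      dyadicSqSum (haarMartingale f) N x := by
  induction N with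
  | zero => simp [haarSystem, dyadicSqSum, dyadicEval, haarMartingale]
  | succ N ih =>
    have hlt := floor_two_pow_mul_lt hx N
    rw [sum_Icc_one_eq_add_sum_Ioc _ (Nat.pow_le_pow_right two_pos N.le_succ), ih,
      sum_Ioc_haar_comp f (· ^ 2) (zero_pow two_ne_zero) hx.1 le_rfl,
      if_pos (by rw [pow_succ]; omega), dyadicSqSum, dyadicSqSum, Finset.sum_range_succ, add_assoc]

lemma ofReal_dyadicSqSum_le_haarSquare_sq (hx : x ∈ Ico (0 : ℝ) 1) (N : ℕ) :
    ENNReal.ofReal (dyadicSqSum (haarMartingale f) N x) ≤ haarSquare f x ^ 2 := by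
  rw [haarSquare, ← ENNReal.rpow_natCast, ← ENNReal.rpow_mul]
  norm_num
  rw [← sum_Icc_sq_haar f hx, ENNReal.ofReal_sum_of_nonneg fun _ _ => sq_nonneg _]
  calc _ = ∑ k ∈ Finset.range (2 ^ N),
        ENNReal.ofReal ((haarCoeff f (k + 1) * haarSystem (k + 1) x) ^ 2) := by
        rw [Finset.range_eq_Ico,
          Finset.sum_Ico_add' (fun j => ENNReal.ofReal ((haarCoeff f j * haarSystem j x) ^ 2)),
          zero_add, Finset.Ico_add_one_right_eq_Icc]
    _ ≤ _ := ENNReal.sum_le_tsum _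

lemma dyadicSqSum_le_of_haarSquare_lt (hx : x ∈ Ico (0 : ℝ) 1) {r : ℝ}
    (hr : haarSquare f x < ENNReal.ofReal r) (N : ℕ) :
    dyadicSqSum (haarMartingale f) N x ≤ r ^ 2 := by
  have hr0 : 0 < r := ENNReal.ofReal_pos.1 (zero_le.trans_lt hr)
  have := (ofReal_dyadicSqSum_le_haarSquare_sq f hx N).trans_lt
    (ENNReal.pow_lt_pow_left two_ne_zero hr)
  rw [← ENNReal.ofReal_pow hr0.le, ENNReal.ofReal_lt_ofReal_iff (by positivity)] at this
  exact this.le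

end Haar

/-- **Chang–Wilson–Wolff good-λ inequality.** There are absolute constants `C, c > 0` such
that for every `f ∈ L²(0,1)`, all `λ > 0` and `0 < ε < 1`,
`|{ℳf > λ, Sf < ελ}| ≤ C·exp(−c/ε²)·|{ℳf > λ/2}|`. -/
theorem chang_wilson_wolff_good_lambda :
    ∃ C c : ℝ, 0 < C ∧ 0 < c ∧
      ∀ f : ℝ → ℝ, MemLp f 2 (volume.restrict (Set.Ico (0:ℝ) 1)) →
      ∀ lam ε : ℝ, 0 < lam → 0 < ε → ε < 1 →
      volume {x ∈ Set.Ico (0:ℝ) 1 |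
          ENNReal.ofReal lam < haarMaximal f x ∧
          haarSquare f x < ENNReal.ofReal (ε * lam)} ≤
        ENNReal.ofReal (C * Real.exp (-c / ε ^ 2)) *
          volume {x ∈ Set.Ico (0:ℝ) 1 | ENNReal.ofReal (lam / 2) < haarMaximal f x} := by
  refine ⟨2, 1 / 32, two_pos, by norm_num, fun f _ lam ε hlam hε _ => ?_⟩
  have hM : ∀ x ∈ Ico (0 : ℝ) 1, haarMaximal f x = dyadicMaximal (haarMartingale f) x :=
    fun x hx => haarMaximal_eq_dyadicMaximal f hx
  calc _ ≤ volume {x ∈ Ico (0 : ℝ) 1 | ENNReal.ofReal lam < dyadicMaximal (haarMartingale f) x ∧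
          ∀ N, dyadicSqSum (haarMartingale f) N x ≤ (ε * lam) ^ 2} :=
        measure_mono <| by
          rintro x ⟨hx, hMx, hS⟩
          exact ⟨hx, hM x hx ▸ hMx, dyadicSqSum_le_of_haarSquare_lt f hx hS⟩
    _ ≤ _ := (isDyadicMartingale_haarMartingale f).volume_goodLambda_le hlam hε
    _ = _ := by
        congr 2
        exact Set.ext fun x => and_congr_right fun hx => by rw [hM x hx]
end

section
/- Let a ⊆ [0,1) be a finite union of half-open intervals [α, β) with Lebesgue measure |a| > 0, and define ξ_a(x) = |[0,x) ∩ a| / |a| for x ∈ a. Then ξ_a is a bijection from a onto [0,1), and for every Lebesgue measurable set E ⊆ a one has |ξ_a(E)| = |E| / |a|. -/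
open MeasureTheory Filter Set

/-- The map `ξ_a(x) = |[0,x) ∩ a| / |a|`. -/
noncomputable def xiMap (a : Set ℝ) (x : ℝ) : ℝ :=
  (volume (Set.Ico 0 x ∩ a)).toReal / (volume a).toReal

/-!
Write `F(x) = |[0,x) ∩ a|`, so that `ξ_a = F / |a|`. `F` is monotone and 1-Lipschitz. Since `a` and
its complement are both finite unions of intervals `[α, β)`, each of them contains a right
neighbourhood `[x, x + ε)` of each of its points. Hence `F` increases strictly to the right of every
point of `a`, and the last point of any level set of `F` lies in `a`: this gives the bijection.

For the measures, `ξ_a` is `|a|⁻¹`-Lipschitz, so `|ξ_a(S)| ≤ |S| / |a|` for every `S`. The images of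
`E` and `a \ E` cover `[0,1)`, whose measure `1 = (|E| + |a \ E|) / |a|` is the sum of the two
bounds, so both bounds are equalities.
-/

open Topology
open scoped ENNReal NNReal

noncomputable def cumVol (a : Set ℝ) (x : ℝ) : ℝ := (volume (Ico 0 x ∩ a)).toReal

lemma measure_Ico_inter_ne_top (a : Set ℝ) (x y : ℝ) : volume (Ico x y ∩ a) ≠ ∞ :=
  measure_ne_top_of_subset inter_subset_left measure_Ico_lt_top.ne

section CumVol

variable {a : Set ℝ}

lemma cumVol_add (ha : a ⊆ Ici 0) {x y : ℝ} (hxy : x ≤ y) :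
    cumVol a y = cumVol a x + (volume (Ico x y ∩ a)).toReal := by
  have hlow : Ico 0 y ∩ a ∩ Ico 0 x = Ico 0 x ∩ a := by
    rw [inter_right_comm, inter_eq_right.2 (Ico_subset_Ico_right hxy)]
  have hhigh : (Ico 0 y ∩ a) \ Ico 0 x = Ico x y ∩ a := by
    ext z
    simp only [Set.mem_sdiff, mem_inter_iff, mem_Ico, not_and, not_lt]
    constructor
    · rintro ⟨⟨⟨h0, hzy⟩, hz⟩, hzx⟩
      exact ⟨⟨hzx h0, hzy⟩, hz⟩
    · rintro ⟨⟨hxz, hzy⟩, hz⟩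
      exact ⟨⟨⟨ha hz, hzy⟩, hz⟩, fun _ => hxz⟩
  rw [cumVol, ← measure_inter_add_sdiff (Ico 0 y ∩ a) measurableSet_Ico, hlow, hhigh,
    ENNReal.toReal_add (measure_Ico_inter_ne_top a 0 x) (measure_Ico_inter_ne_top a x y), cumVol]

lemma monotone_cumVol (ha : a ⊆ Ici 0) : Monotone (cumVol a) := fun _ _ hxy =>
  (cumVol_add ha hxy).symm ▸ le_add_of_nonneg_right ENNReal.toReal_nonneg

lemma lipschitzWith_cumVol (ha : a ⊆ Ici 0) : LipschitzWith 1 (cumVol a) := by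
  refine LipschitzWith.of_le_add fun x y => ?_
  rcases le_total x y with hxy | hyx
  · exact (monotone_cumVol ha hxy).trans (le_add_of_nonneg_right dist_nonneg)
  · rw [cumVol_add ha hyx, Real.dist_eq, abs_of_nonneg (sub_nonneg.2 hyx)]
    gcongr
    calc (volume (Ico y x ∩ a)).toReal ≤ (volume (Ico y x)).toReal :=
          ENNReal.toReal_mono measure_Ico_lt_top.ne (measure_mono inter_subset_left)
      _ = x - y := by rw [Real.volume_Ico, ENNReal.toReal_ofReal (sub_nonneg.2 hyx)]

lemma cumVol_zero : cumVol a 0 = 0 := by simp [cumVol]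

lemma cumVol_one (ha : a ⊆ Ico 0 1) : cumVol a 1 = (volume a).toReal := by
  rw [cumVol, inter_eq_self_of_subset_right ha]

lemma cumVol_lt_of_mem_nhdsGE (ha : a ⊆ Ici 0) {x y : ℝ} (hx : a ∈ 𝓝[≥] x) (hxy : x < y) :
    cumVol a x < cumVol a y := by
  obtain ⟨z, hxz, hsub⟩ :=
    mem_nhdsGE_iff_exists_Ico_subset.1 (inter_mem (Ico_mem_nhdsGE hxy) hx)
  have hpos : 0 < volume (Ico x y ∩ a) := calc
    0 < volume (Ico x z) := by simpa [Real.volume_Ico] using hxz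
    _ ≤ volume (Ico x y ∩ a) := measure_mono hsub
  rw [cumVol_add ha hxy.le]
  exact lt_add_of_pos_right _ (ENNReal.toReal_pos hpos.ne' (measure_Ico_inter_ne_top a x y))

lemma exists_gt_cumVol_eq_of_compl_mem_nhdsGE (ha : a ⊆ Ici 0) {x : ℝ} (hx : aᶜ ∈ 𝓝[≥] x) :
    ∃ y > x, cumVol a y = cumVol a x := by
  obtain ⟨y, hxy, hsub⟩ := mem_nhdsGE_iff_exists_Ico_subset.1 hx
  refine ⟨y, hxy, ?_⟩
  rw [cumVol_add ha hxy.le, (subset_compl_iff_disjoint_right.1 hsub).inter_eq,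
    measure_empty, ENNReal.toReal_zero, add_zero]

lemma strictMonoOn_cumVol (ha : a ⊆ Ici 0) (hopen : ∀ x ∈ a, a ∈ 𝓝[≥] x) :
    StrictMonoOn (cumVol a) a := fun x hx _ _ hxy => cumVol_lt_of_mem_nhdsGE ha (hopen x hx) hxy

lemma Ico_subset_image_cumVol (ha : a ⊆ Ico 0 1) (hclosed : ∀ x ∉ a, aᶜ ∈ 𝓝[≥] x) :
    Ico 0 (volume a).toReal ⊆ cumVol a '' a := by
  intro s hs
  have ha₀ : a ⊆ Ici 0 := ha.trans Ico_subset_Ici_self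
  have hcont := (lipschitzWith_cumVol ha₀).continuous
  set L := cumVol a ⁻¹' {s}
  have hL_ne : L.Nonempty := intermediate_value_univ 0 1 hcont
    ⟨by rw [cumVol_zero]; exact hs.1, by rw [cumVol_one ha]; exact hs.2.le⟩
  have hL_bdd : BddAbove L := ⟨1, fun y (hy : cumVol a y = s) => by
    by_contra! h1y
    have := monotone_cumVol ha₀ h1y.le
    rw [cumVol_one ha, hy] at this
    exact this.not_gt hs.2⟩
  have hsup : sSup L ∈ L := (isClosed_singleton.preimage hcont).csSup_mem hL_ne hL_bdd
  refine ⟨sSup L, ?_, hsup⟩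
  by_contra hnot
  obtain ⟨y, hy, hys⟩ := exists_gt_cumVol_eq_of_compl_mem_nhdsGE ha₀ (hclosed _ hnot)
  exact hy.not_ge (le_csSup hL_bdd (hys.trans hsup))

lemma image_cumVol (ha : a ⊆ Ico 0 1) (hopen : ∀ x ∈ a, a ∈ 𝓝[≥] x)
    (hclosed : ∀ x ∉ a, aᶜ ∈ 𝓝[≥] x) : cumVol a '' a = Ico 0 (volume a).toReal := by
  refine (Ico_subset_image_cumVol ha hclosed).antisymm' ?_
  rintro _ ⟨x, hx, rfl⟩
  refine ⟨ENNReal.toReal_nonneg, ?_⟩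
  rw [← cumVol_one ha]
  exact cumVol_lt_of_mem_nhdsGE (ha.trans Ico_subset_Ici_self) (hopen x hx) (ha hx).2

end CumVol

lemma eventually_nhdsGE_mem_Ico_iff (α β x : ℝ) :
    ∀ᶠ y in 𝓝[≥] x, (y ∈ Ico α β ↔ x ∈ Ico α β) := by
  rcases lt_or_ge x α with hxα | hαx
  · filter_upwards [nhdsWithin_le_nhds (Iio_mem_nhds hxα)] with y (hy : y < α)
    exact iff_of_false (fun h => hy.not_ge h.1) (fun h => hxα.not_ge h.1)
  rcases lt_or_ge x β with hxβ | hβx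
  · filter_upwards [Ico_mem_nhdsGE hxβ] with y hy
    exact iff_of_true ⟨hαx.trans hy.1, hy.2⟩ ⟨hαx, hxβ⟩
  · filter_upwards [self_mem_nhdsWithin] with y (hy : x ≤ y)
    exact iff_of_false (fun h => (hβx.trans hy).not_gt h.2) (fun h => hβx.not_gt h.2)

lemma eventually_nhdsGE_mem_iUnion_Ico_iff {ι : Type*} [Finite ι] (α β : ι → ℝ) (x : ℝ) :
    ∀ᶠ y in 𝓝[≥] x, (y ∈ ⋃ i, Ico (α i) (β i) ↔ x ∈ ⋃ i, Ico (α i) (β i)) := by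
  filter_upwards [eventually_all.2 fun i => eventually_nhdsGE_mem_Ico_iff (α i) (β i) x]
    with y hy
  simp only [mem_iUnion]
  exact exists_congr hy

lemma volume_image_le_of_lipschitzOnWith {f : ℝ → ℝ} {K : ℝ≥0} {s : Set ℝ}
    (hf : LipschitzOnWith K f s) : volume (f '' s) ≤ K * volume s := by
  simpa [← hausdorffMeasure_real] using hf.hausdorffMeasure_image_le zero_le_one

lemma measure_image_eq_mul_of_forall_le {α β : Type*} [MeasurableSpace α] [MeasurableSpace β]
    {μ : Measure α} {ν : Measure β} {f : α → β} {K : ℝ≥0∞} {a E : Set α}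
    (hle : ∀ s ⊆ a, ν (f '' s) ≤ K * μ s) (ha : ν (f '' a) = K * μ a) (ha_fin : ν (f '' a) ≠ ∞)
    (hE : E ⊆ a) (hEm : NullMeasurableSet E μ) : ν (f '' E) = K * μ E := by
  refine le_antisymm (hle E hE) ?_
  have hrest : K * μ (a \ E) ≠ ∞ :=
    ne_top_of_le_ne_top (ha ▸ ha_fin) (by gcongr; exact sdiff_subset)
  refine ENNReal.le_of_add_le_add_right hrest ?_
  calc K * μ E + K * μ (a \ E) = ν (f '' a) := by
        rw [← mul_add, measure_add_sdiff hEm, union_eq_right.2 hE, ha]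
    _ = ν (f '' E ∪ f '' (a \ E)) := by rw [← image_union, union_sdiff_cancel hE]
    _ ≤ ν (f '' E) + ν (f '' (a \ E)) := measure_union_le _ _
    _ ≤ ν (f '' E) + K * μ (a \ E) := by gcongr; exact hle _ sdiff_subset

lemma xiMap_eq_cumVol_mul_inv (a : Set ℝ) :
    xiMap a = fun x => cumVol a x * ((volume a).toReal)⁻¹ :=
  funext fun _ => div_eq_mul_inv _ _

lemma lipschitzWith_xiMap {a : Set ℝ} (ha : a ⊆ Ici 0) :
    LipschitzWith (volume a).toNNReal⁻¹ (xiMap a) := by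
  refine LipschitzWith.of_le_add_mul _ fun x y => ?_
  have h := mul_le_mul_of_nonneg_right ((lipschitzWith_cumVol ha).le_add_mul x y)
    (inv_nonneg.2 (ENNReal.toReal_nonneg (a := volume a)))
  rw [NNReal.coe_one, one_mul] at h
  rw [xiMap_eq_cumVol_mul_inv, NNReal.coe_inv, ENNReal.coe_toNNReal_eq_toReal]
  linarith

lemma bijOn_xiMap {a : Set ℝ} (ha : a ⊆ Ico 0 1) (hopen : ∀ x ∈ a, a ∈ 𝓝[≥] x)
    (hclosed : ∀ x ∉ a, aᶜ ∈ 𝓝[≥] x) (hpos : 0 < (volume a).toReal) :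
    BijOn (xiMap a) a (Ico 0 1) := by
  have hmono : StrictMonoOn (xiMap a) a := fun x hx y hy hxy =>
    div_lt_div_of_pos_right (strictMonoOn_cumVol (ha.trans Ico_subset_Ici_self) hopen hx hy hxy)
      hpos
  have himage : xiMap a '' a = Ico 0 1 := by
    rw [xiMap_eq_cumVol_mul_inv, ← image_image (· * ((volume a).toReal)⁻¹) (cumVol a),
      image_cumVol ha hopen hclosed, image_mul_right_Ico _ _ (inv_pos.2 hpos), zero_mul,
      mul_inv_cancel₀ hpos.ne']
  exact himage ▸ hmono.injOn.bijOn_image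

/-- For a simple set `a ⊆ [0,1)` (a finite union of half-open intervals) of positive
measure, `ξ_a(x) = |[0,x) ∩ a| / |a|` is a bijection from `a` onto `[0,1)` and for every
Lebesgue measurable `E ⊆ a` one has `|ξ_a(E)| = |E| / |a|`. -/
theorem xiMap_bijOn_and_measure (a : Set ℝ)
    (hsimple : ∃ n : ℕ, ∃ α β : Fin n → ℝ, a = ⋃ i, Set.Ico (α i) (β i))
    (hsub : a ⊆ Set.Ico (0:ℝ) 1) (hpos : 0 < volume a) :
    Set.BijOn (xiMap a) a (Set.Ico (0:ℝ) 1) ∧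
    ∀ E : Set ℝ, E ⊆ a → NullMeasurableSet E volume →
      volume (xiMap a '' E) = volume E / volume a := by
  obtain ⟨n, α, β, hrep⟩ := hsimple
  have hlocal : ∀ x, ∀ᶠ y in 𝓝[≥] x, (y ∈ a ↔ x ∈ a) := fun x => by
    rw [hrep]; exact eventually_nhdsGE_mem_iUnion_Ico_iff α β x
  have hopen : ∀ x ∈ a, a ∈ 𝓝[≥] x := fun x hx => (hlocal x).mono fun _ hy => hy.2 hx
  have hclosed : ∀ x ∉ a, aᶜ ∈ 𝓝[≥] x := fun x hx => (hlocal x).mono fun _ hy => mt hy.1 hx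
  have hfin : volume a ≠ ∞ := measure_ne_top_of_subset hsub measure_Ico_lt_top.ne
  have hbij := bijOn_xiMap hsub hopen hclosed (ENNReal.toReal_pos hpos.ne' hfin)
  refine ⟨hbij, fun E hE hEm => ?_⟩
  have hK : (((volume a).toNNReal⁻¹ : ℝ≥0) : ℝ≥0∞) = (volume a)⁻¹ := by
    rw [ENNReal.coe_inv (ENNReal.toNNReal_pos hpos.ne' hfin).ne', ENNReal.coe_toNNReal hfin]
  have hlip := lipschitzWith_xiMap (hsub.trans Ico_subset_Ici_self)
  have himage : volume (xiMap a '' a) = (volume a)⁻¹ * volume a := by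
    rw [hbij.image_eq, Real.volume_Ico, sub_zero, ENNReal.ofReal_one,
      ENNReal.inv_mul_cancel hpos.ne' hfin]
  rw [ENNReal.div_eq_inv_mul]
  refine measure_image_eq_mul_of_forall_le
    (fun s _ => hK ▸ volume_image_le_of_lipschitzOnWith hlip.lipschitzOnWith) himage ?_ hE hEm
  rw [himage, ENNReal.inv_mul_cancel hpos.ne' hfin]
  exact ENNReal.one_ne_top
end

section
/- There exists an absolute constant c > 0 such that for every n ≥ 2 there exist real coefficients a_1, …, a_n, not all zero, and a permutation σ of {1, …, n} with ‖ max_{1 ≤ m ≤ n} | ∑_{k=1}^m a_k χ_{σ(k)} | ‖_{L²(0,1)} ≥ c · √(log n) · (∑_{k=1}^n a_k²)^{1/2}, where {χ_j} is the L²-normalized classical Haar system. -/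
/-!
Let `K = ⌊log₂ n⌋`. List the Haar functions of generations `k < K` in the order of the
midpoints of their supports, with coefficients `2^(-k/2)`: every term is `±1` on its support and
`∑ a_j² = K`. A point `x ∈ [0,1)` lies in exactly one support of each generation `k`, where the
term is `+1` or `-1` according as the binary digit `b_{k+1}(x)` is `0` or `1`; in the second case
the midpoint lies left of `x`, so the term occurs among the first `⌊2^K x⌋` ones. With `B` the
number of ones among the first `K` digits of `x`, the partial sum up to `⌊2^K x⌋` is therefore
`-B` and the full sum is `K - 2B`, so the maximal partial sum is at least `K/3` everywhere, while
`√(log₂ n) · (∑ a_j²)^(1/2) ≤ 2K`.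
-/

open MeasureTheory Filter Set

namespace NikishinUlyanov

lemma factorization_two_pow_mul_odd (a c : ℕ) (hc : ¬ 2 ∣ c) :
    (2 ^ a * c).factorization 2 = a := by
  have hc0 : c ≠ 0 := by rintro rfl; exact hc (dvd_zero 2)
  rw [Nat.factorization_mul (by positivity) hc0]
  simp [Nat.Prime.factorization Nat.prime_two, Nat.factorization_eq_zero_of_not_dvd hc]

lemma ordCompl_two_odd {j : ℕ} (hj : j ≠ 0) : ordCompl[2] j % 2 = 1 :=
  Nat.two_dvd_ne_zero.1 (Nat.not_dvd_ordCompl Nat.prime_two hj)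

lemma factorization_two_lt_and_ordCompl_lt {K j : ℕ} (hj : j ∈ Finset.Ioo 0 (2 ^ K)) :
    j.factorization 2 < K ∧ ordCompl[2] j < 2 * 2 ^ (K - 1 - j.factorization 2) := by
  rw [Finset.mem_Ioo] at hj
  have hv : j.factorization 2 < K :=
    (Nat.pow_lt_pow_iff_right (by norm_num)).1 ((Nat.ordProj_le 2 hj.1.ne').trans_lt hj.2)
  refine ⟨hv, Nat.lt_of_mul_lt_mul_left (a := 2 ^ j.factorization 2) ?_⟩
  rw [Nat.ordProj_mul_ordCompl_eq_self, ← pow_succ', ← pow_add,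
    show j.factorization 2 + (K - 1 - j.factorization 2 + 1) = K by omega]
  exact hj.2

lemma floor_mul_eq_iff {N x : ℝ} (hN : 0 < N) (hx : 0 ≤ x) (a : ℕ) :
    ⌊N * x⌋₊ = a ↔ a / N ≤ x ∧ x < (a + 1) / N := by
  rw [Nat.floor_eq_iff (by positivity), div_le_iff₀ hN, lt_div_iff₀ hN, mul_comm x]

lemma floor_two_pow_mul_lt {x : ℝ} (hx0 : 0 ≤ x) (hx1 : x < 1) (k : ℕ) :
    ⌊2 ^ k * x⌋₊ < 2 ^ k := by
  rw [Nat.floor_lt (by positivity)]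
  push_cast
  nlinarith [pow_pos (two_pos : (0 : ℝ) < 2) k]

lemma sum_Icc_ite_eq_ite_mod_two (u v : ℝ) {k d : ℕ} (hd : d < 2 ^ (k + 1)) :
    ∑ i ∈ Finset.Icc 1 (2 ^ k), (if d = 2 * i - 2 then u else if d = 2 * i - 1 then v else 0) =
      if d % 2 = 0 then u else v := by
  rw [pow_succ] at hd
  rw [Finset.sum_eq_single_of_mem (d / 2 + 1) (Finset.mem_Icc.2 ⟨by omega, by omega⟩)]
  · split_ifs <;> first | rfl | omega
  · intro i hi hne
    rw [Finset.mem_Icc] at hi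
    rw [if_neg (by omega), if_neg (by omega)]

lemma abs_sum_Icc_le_iSup (f : ℕ → ℝ) {m n : ℕ} (hm : m ≤ n) :
    |∑ j ∈ Finset.Icc 1 m, f j| ≤ ⨆ l : Fin n, |∑ j ∈ Finset.Icc 1 (l.1 + 1), f j| := by
  cases m with
  | zero =>
    simpa using Real.iSup_nonneg fun l : Fin n => abs_nonneg (∑ j ∈ Finset.Icc 1 (l.1 + 1), f j)
  | succ m =>
    exact le_ciSup (Set.finite_range fun l : Fin n => |∑ j ∈ Finset.Icc 1 (l.1 + 1), f j|).bddAbove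
      ⟨m, hm⟩

lemma ofReal_le_eLpNorm {α : Type*} [MeasurableSpace α] {μ : Measure α} [IsProbabilityMeasure μ]
    {p : ENNReal} (hp : p ≠ 0) {f : α → ℝ} {c : ℝ} (hf : ∀ᵐ x ∂μ, c ≤ f x) :
    ENNReal.ofReal c ≤ eLpNorm f p μ := by
  rcases le_or_gt c 0 with hc | hc
  · simp [ENNReal.ofReal_of_nonpos hc]
  calc ENNReal.ofReal c = eLpNorm (fun _ => c) p μ := by
        rw [eLpNorm_const c hp (IsProbabilityMeasure.ne_zero μ), measure_univ, ENNReal.one_rpow,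
          mul_one, Real.enorm_eq_ofReal hc.le]
    _ ≤ eLpNorm f p μ := eLpNorm_mono_ae <| hf.mono fun x hx => by
        rw [Real.norm_of_nonneg hc.le]
        exact hx.trans (le_abs_self _)

lemma sqrt_logb_mul_sqrt_natLog_le {n : ℕ} (hn : 2 ≤ n) :
    √(Real.logb 2 n) * √(Nat.log 2 n) ≤ 2 * Nat.log 2 n := by
  have hK : (1 : ℝ) ≤ Nat.log 2 n := by exact_mod_cast Nat.log_pos one_lt_two hn
  have hlog : Real.logb 2 n < Nat.log 2 n + 1 := by
    have := Nat.lt_floor_add_one (Real.logb 2 n)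
    rwa [← Nat.cast_ofNat, Real.natFloor_logb_natCast] at this
  rw [← Real.sqrt_mul' _ (by positivity),
    ← Real.sqrt_sq (by positivity : (0 : ℝ) ≤ 2 * Nat.log 2 n)]
  exact Real.sqrt_le_sqrt (by nlinarith)

/-- The dyadic intervals `[(i-1)/2^k, i/2^k)` of generation `k < K`, encoded as `⟨k, i⟩`. -/
def dyadicPairs (K : ℕ) : Finset (Σ _ : ℕ, ℕ) :=
  (Finset.range K).sigma fun k => Finset.Icc 1 (2 ^ k)

/-- `2^K` times the midpoint of the dyadic interval `p`. -/
def midpointIndex (K : ℕ) (p : Σ _ : ℕ, ℕ) : ℕ :=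
  2 ^ (K - 1 - p.1) * (2 * p.2 - 1)

def dyadicPairOf (K j : ℕ) : Σ _ : ℕ, ℕ :=
  ⟨K - 1 - j.factorization 2, (ordCompl[2] j + 1) / 2⟩

lemma mk_mem_dyadicPairs {K k i : ℕ} :
    (⟨k, i⟩ : Σ _ : ℕ, ℕ) ∈ dyadicPairs K ↔ k < K ∧ 1 ≤ i ∧ i ≤ 2 ^ k := by
  simp [dyadicPairs]

lemma dyadicPairOf_midpointIndex {K : ℕ} {p : Σ _ : ℕ, ℕ} (hp : p ∈ dyadicPairs K) :
    dyadicPairOf K (midpointIndex K p) = p := by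
  obtain ⟨k, i⟩ := p
  obtain ⟨hk, hi, -⟩ := mk_mem_dyadicPairs.1 hp
  have hodd : ¬ 2 ∣ 2 * i - 1 := by omega
  simp only [dyadicPairOf, midpointIndex, factorization_two_pow_mul_odd _ _ hodd,
    Nat.mul_div_cancel_left _ (Nat.two_pow_pos _)]
  congr 1 <;> omega

lemma midpointIndex_mem {K : ℕ} {p : Σ _ : ℕ, ℕ} (hp : p ∈ dyadicPairs K) :
    midpointIndex K p ∈ Finset.Ioo 0 (2 ^ K) := by
  obtain ⟨k, i⟩ := p
  obtain ⟨hk, hi, hik⟩ := mk_mem_dyadicPairs.1 hp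
  have hK : 2 ^ (K - 1 - k) * 2 ^ (k + 1) = 2 ^ K := by rw [← pow_add]; congr 1; omega
  have : 2 ^ (K - 1 - k) * (2 * i - 1) < 2 ^ (K - 1 - k) * 2 ^ (k + 1) :=
    Nat.mul_lt_mul_of_pos_left (by rw [pow_succ]; omega) (Nat.two_pow_pos _)
  rw [Finset.mem_Ioo, midpointIndex]
  exact ⟨Nat.mul_pos (Nat.two_pow_pos _) (by omega : 0 < 2 * i - 1), this.trans_eq hK⟩

lemma midpointIndex_dyadicPairOf {K j : ℕ} (hj : j ∈ Finset.Ioo 0 (2 ^ K)) :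
    midpointIndex K (dyadicPairOf K j) = j := by
  have hv := (factorization_two_lt_and_ordCompl_lt hj).1
  have hodd := ordCompl_two_odd (Finset.mem_Ioo.1 hj).1.ne'
  conv_rhs => rw [← Nat.ordProj_mul_ordCompl_eq_self j 2]
  simp only [midpointIndex, dyadicPairOf]
  generalize ordCompl[2] j = c at *
  congr 2 <;> omega

lemma dyadicPairOf_mem {K j : ℕ} (hj : j ∈ Finset.Ioo 0 (2 ^ K)) :
    dyadicPairOf K j ∈ dyadicPairs K := by
  obtain ⟨hv, hc⟩ := factorization_two_lt_and_ordCompl_lt hj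
  have hodd := ordCompl_two_odd (Finset.mem_Ioo.1 hj).1.ne'
  rw [dyadicPairOf, mk_mem_dyadicPairs]
  generalize ordCompl[2] j = c at *
  omega

lemma sum_Ioo_eq_sum_dyadicPairs {M : Type*} [AddCommMonoid M] (K : ℕ) (f : ℕ → M) :
    ∑ j ∈ Finset.Ioo 0 (2 ^ K), f j = ∑ p ∈ dyadicPairs K, f (midpointIndex K p) :=
  Finset.sum_nbij' (dyadicPairOf K) (midpointIndex K) (fun _ => dyadicPairOf_mem)
    (fun _ => midpointIndex_mem) (fun _ => midpointIndex_dyadicPairOf)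
    (fun _ => dyadicPairOf_midpointIndex) (fun _ hj => by rw [midpointIndex_dyadicPairOf hj])

lemma midpointIndex_le_floor_iff {K k i : ℕ} (hp : (⟨k, i⟩ : Σ _ : ℕ, ℕ) ∈ dyadicPairs K)
    (x : ℝ) : midpointIndex K ⟨k, i⟩ ≤ ⌊2 ^ K * x⌋₊ ↔ 2 * i - 1 ≤ ⌊2 ^ (k + 1) * x⌋₊ := by
  have hk := (mk_mem_dyadicPairs.1 hp).1
  have hK : (2 : ℝ) ^ (k + 1) * x = 2 ^ K * x / ((2 ^ (K - 1 - k) : ℕ) : ℝ) := by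
    rw [Nat.cast_pow, Nat.cast_ofNat, eq_div_iff (by positivity), mul_right_comm, ← pow_add,
      show k + 1 + (K - 1 - k) = K by omega]
  rw [hK, Nat.floor_div_natCast, Nat.le_div_iff_mul_le (Nat.two_pow_pos _), midpointIndex,
    mul_comm]

def haarIndex (p : Σ _ : ℕ, ℕ) : ℕ := 2 ^ p.1 + p.2

def haarPairOf (t : ℕ) : Σ _ : ℕ, ℕ := ⟨Nat.log 2 (t - 1), t - 2 ^ Nat.log 2 (t - 1)⟩

lemma haarPairOf_haarIndex {k i : ℕ} (hi : 1 ≤ i) (hik : i ≤ 2 ^ k) :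
    haarPairOf (haarIndex ⟨k, i⟩) = ⟨k, i⟩ := by
  have hlog : Nat.log 2 (2 ^ k + i - 1) = k :=
    Nat.log_eq_of_pow_le_of_lt_pow (by omega) (by rw [pow_succ]; omega)
  simp only [haarPairOf, haarIndex, hlog]
  congr 1
  omega

lemma haarSystem_haarIndex {k i : ℕ} (hi : 1 ≤ i) (hik : i ≤ 2 ^ k) :
    haarSystem (haarIndex ⟨k, i⟩) = haarFun k i := by
  obtain ⟨t, ht⟩ : ∃ t, haarIndex ⟨k, i⟩ = t + 2 :=
    ⟨2 ^ k + i - 2, by have := Nat.one_le_two_pow (n := k); simp only [haarIndex]; omega⟩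
  have hpair := haarPairOf_haarIndex hi hik
  rw [ht, haarPairOf] at hpair
  simp only [Sigma.mk.injEq, heq_eq_eq, show t + 2 - 1 = t + 1 by omega] at hpair
  obtain ⟨hk, hi'⟩ := hpair
  rw [hk] at hi'
  rw [ht, haarSystem, hk, hi']

lemma haarIndex_mem_Icc {K : ℕ} {p : Σ _ : ℕ, ℕ} (hp : p ∈ dyadicPairs K) :
    haarIndex p ∈ Set.Icc 2 (2 ^ K) := by
  obtain ⟨k, i⟩ := p
  obtain ⟨hk, hi, hik⟩ := mk_mem_dyadicPairs.1 hp
  have : 2 ^ (k + 1) ≤ 2 ^ K := Nat.pow_le_pow_right (by norm_num) hk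
  have := Nat.one_le_two_pow (n := k)
  simp only [haarIndex, Set.mem_Icc]
  rw [pow_succ] at *
  omega

lemma haarFun_eq_ite_floor (k : ℕ) {i : ℕ} (hi : 1 ≤ i) {x : ℝ} (hx : 0 ≤ x) :
    haarFun k i x =
      if ⌊2 ^ (k + 1) * x⌋₊ = 2 * i - 2 then √(2 ^ k)
      else if ⌊2 ^ (k + 1) * x⌋₊ = 2 * i - 1 then -√(2 ^ k) else 0 := by
  have h2 : ((2 * i - 2 : ℕ) : ℝ) = 2 * i - 2 := by
    push_cast [Nat.cast_sub (by omega : 2 ≤ 2 * i)]; ring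
  have h1 : ((2 * i - 1 : ℕ) : ℝ) = 2 * i - 1 := by
    push_cast [Nat.cast_sub (by omega : 1 ≤ 2 * i)]; ring
  simp only [floor_mul_eq_iff (by positivity : (0 : ℝ) < 2 ^ (k + 1)) hx, h1, h2,
    sub_add_cancel, show (2 * i - 2 : ℝ) + 1 = 2 * i - 1 by ring]
  rfl

/-- The Haar functions of generations `< K` are put at the positions `midpointIndex K p`, i.e. in
the order of the midpoints of their supports; `χ_1` goes to position `2^K`, and all later
positions are fixed. -/
def rearrangement (K j : ℕ) : ℕ :=
  if j ∈ Finset.Ioo 0 (2 ^ K) then haarIndex (dyadicPairOf K j)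
  else if j = 2 ^ K then 1 else j

def rearrangementInv (K t : ℕ) : ℕ :=
  if t = 1 then 2 ^ K
  else if t ≤ 2 ^ K then midpointIndex K (haarPairOf t) else t

lemma rearrangement_of_mem {K j : ℕ} (hj : j ∈ Finset.Ioo 0 (2 ^ K)) :
    rearrangement K j = haarIndex (dyadicPairOf K j) := if_pos hj

lemma rearrangementInv_rearrangement {K j : ℕ} (hj : j ≠ 0) :
    rearrangementInv K (rearrangement K j) = j := by
  by_cases hjK : j ∈ Finset.Ioo 0 (2 ^ K)
  · have hp := dyadicPairOf_mem hjK
    obtain ⟨h2, hK⟩ := haarIndex_mem_Icc hp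
    obtain ⟨⟨k, i⟩, hki⟩ : ∃ p, dyadicPairOf K j = p := ⟨_, rfl⟩
    rw [hki, mk_mem_dyadicPairs] at hp
    rw [rearrangement_of_mem hjK, rearrangementInv, if_neg (by omega), if_pos hK, hki,
      haarPairOf_haarIndex hp.2.1 hp.2.2, ← hki, midpointIndex_dyadicPairOf hjK]
  · rw [Finset.mem_Ioo] at hjK
    by_cases h : j = 2 ^ K
    · simp [rearrangement, rearrangementInv, h]
    · have : 2 ^ K < j := by omega
      have hj1 : j ≠ 1 := by have := Nat.one_le_two_pow (n := K); omega
      simp only [rearrangement, rearrangementInv, Finset.mem_Ioo, hjK, h, hj1, this.not_ge,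
        if_false]

lemma rearrangement_mapsTo {K n : ℕ} (hn : 2 ^ K ≤ n) :
    Set.MapsTo (rearrangement K) (Set.Icc 1 n) (Set.Icc 1 n) := by
  intro j ⟨hj1, hjn⟩
  by_cases hjK : j ∈ Finset.Ioo 0 (2 ^ K)
  · obtain ⟨h2, hK⟩ := haarIndex_mem_Icc (dyadicPairOf_mem hjK)
    rw [rearrangement_of_mem hjK]
    exact ⟨by omega, hK.trans hn⟩
  · by_cases h : j = 2 ^ K
    · rw [rearrangement, if_neg hjK, if_pos h]
      exact ⟨le_rfl, hj1.trans hjn⟩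
    · rw [rearrangement, if_neg hjK, if_neg h]
      exact ⟨hj1, hjn⟩

lemma rearrangement_bijOn {K n : ℕ} (hn : 2 ^ K ≤ n) :
    Set.BijOn (rearrangement K) (Set.Icc 1 n) (Set.Icc 1 n) :=
  ((Set.finite_Icc 1 n).injOn_iff_bijOn_of_mapsTo (rearrangement_mapsTo hn)).1 <|
    Set.LeftInvOn.injOn (f₁' := rearrangementInv K) fun _ hj =>
      rearrangementInv_rearrangement (by have := hj.1; omega)

noncomputable def coefficient (K j : ℕ) : ℝ :=
  if j ∈ Finset.Ioo 0 (2 ^ K) then (√(2 ^ (dyadicPairOf K j).1))⁻¹ else 0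

lemma coefficient_midpointIndex {K k i : ℕ} (hp : (⟨k, i⟩ : Σ _ : ℕ, ℕ) ∈ dyadicPairs K) :
    coefficient K (midpointIndex K ⟨k, i⟩) = (√(2 ^ k))⁻¹ := by
  rw [coefficient, if_pos (midpointIndex_mem hp), dyadicPairOf_midpointIndex hp]

lemma sum_Icc_coefficient_mul {K n : ℕ} (hn : 2 ^ K ≤ n) (g : ℕ → ℝ) :
    ∑ j ∈ Finset.Icc 1 n, coefficient K j * g j =
      ∑ p ∈ dyadicPairs K, coefficient K (midpointIndex K p) * g (midpointIndex K p) := by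
  rw [← Finset.sum_subset (s₁ := Finset.Ioo 0 (2 ^ K)), sum_Ioo_eq_sum_dyadicPairs]
  · intro j hj
    simp only [Finset.mem_Ioo, Finset.mem_Icc] at hj ⊢
    omega
  · intro j _ hj
    rw [coefficient, if_neg hj, zero_mul]

lemma sum_coefficient_sq {K n : ℕ} (hn : 2 ^ K ≤ n) :
    ∑ j ∈ Finset.Icc 1 n, coefficient K j ^ 2 = K := by
  simp only [sq]
  rw [sum_Icc_coefficient_mul hn, dyadicPairs, Finset.sum_sigma]
  calc ∑ k ∈ Finset.range K, ∑ i ∈ Finset.Icc 1 (2 ^ k),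
        coefficient K (midpointIndex K ⟨k, i⟩) * coefficient K (midpointIndex K ⟨k, i⟩)
      = ∑ k ∈ Finset.range K, ∑ i ∈ Finset.Icc 1 (2 ^ k), ((2 : ℝ) ^ k)⁻¹ := by
        refine Finset.sum_congr rfl fun k hk => Finset.sum_congr rfl fun i hi => ?_
        rw [coefficient_midpointIndex (Finset.mem_sigma.2 ⟨hk, hi⟩), ← mul_inv,
          Real.mul_self_sqrt (by positivity)]
    _ = K := by simp

lemma coefficient_mul_haarSystem {K k i : ℕ} (hp : (⟨k, i⟩ : Σ _ : ℕ, ℕ) ∈ dyadicPairs K)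
    {x : ℝ} (hx : 0 ≤ x) :
    coefficient K (midpointIndex K ⟨k, i⟩) *
        haarSystem (rearrangement K (midpointIndex K ⟨k, i⟩)) x =
      if ⌊2 ^ (k + 1) * x⌋₊ = 2 * i - 2 then 1
      else if ⌊2 ^ (k + 1) * x⌋₊ = 2 * i - 1 then -1 else 0 := by
  obtain ⟨-, hi, hik⟩ := mk_mem_dyadicPairs.1 hp
  have hs : √(2 ^ k : ℝ) ≠ 0 := by positivity
  rw [coefficient_midpointIndex hp, rearrangement_of_mem (midpointIndex_mem hp),
    dyadicPairOf_midpointIndex hp, haarSystem_haarIndex hi hik, haarFun_eq_ite_floor k hi hx]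
  split_ifs <;> simp [hs]

/-- The `(k+1)`-st binary digit of `x ≥ 0`. -/
noncomputable def binaryDigit (k : ℕ) (x : ℝ) : ℕ := ⌊2 ^ (k + 1) * x⌋₊ % 2

lemma ite_binaryDigit_eq (u v : ℝ) (k : ℕ) (x : ℝ) :
    (if binaryDigit k x = 0 then u else v) = u + (v - u) * binaryDigit k x := by
  rcases Nat.mod_two_eq_zero_or_one ⌊2 ^ (k + 1) * x⌋₊ with h | h <;>
    simp [binaryDigit, h]

lemma sum_dyadicPairs_ite_floor (u v : ℝ) (K : ℕ) {x : ℝ} (hx0 : 0 ≤ x) (hx1 : x < 1) :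
    ∑ p ∈ dyadicPairs K, (if ⌊2 ^ (p.1 + 1) * x⌋₊ = 2 * p.2 - 2 then u
      else if ⌊2 ^ (p.1 + 1) * x⌋₊ = 2 * p.2 - 1 then v else 0) =
      ∑ k ∈ Finset.range K, if binaryDigit k x = 0 then u else v := by
  rw [dyadicPairs, Finset.sum_sigma]
  exact Finset.sum_congr rfl fun k _ =>
    sum_Icc_ite_eq_ite_mod_two u v (floor_two_pow_mul_lt hx0 hx1 _)

lemma sum_Icc_eq_sum_dyadicPairs {K n : ℕ} (hn : 2 ^ K ≤ n) {x : ℝ} (hx : 0 ≤ x) :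
    ∑ j ∈ Finset.Icc 1 n, coefficient K j * haarSystem (rearrangement K j) x =
      ∑ p ∈ dyadicPairs K, (if ⌊2 ^ (p.1 + 1) * x⌋₊ = 2 * p.2 - 2 then 1
        else if ⌊2 ^ (p.1 + 1) * x⌋₊ = 2 * p.2 - 1 then -1 else 0) := by
  rw [sum_Icc_coefficient_mul hn]
  exact Finset.sum_congr rfl fun ⟨k, i⟩ hp => coefficient_mul_haarSystem hp hx

lemma sum_Icc_floor_eq_sum_dyadicPairs (K : ℕ) {x : ℝ} (hx0 : 0 ≤ x) (hx1 : x < 1) :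
    ∑ j ∈ Finset.Icc 1 ⌊2 ^ K * x⌋₊, coefficient K j * haarSystem (rearrangement K j) x =
      ∑ p ∈ dyadicPairs K, (if ⌊2 ^ (p.1 + 1) * x⌋₊ = 2 * p.2 - 2 then 0
        else if ⌊2 ^ (p.1 + 1) * x⌋₊ = 2 * p.2 - 1 then -1 else 0) := by
  have hm := floor_two_pow_mul_lt hx0 hx1 K
  have hfilter : Finset.Icc 1 ⌊2 ^ K * x⌋₊ =
      (Finset.Ioo 0 (2 ^ K)).filter (· ≤ ⌊2 ^ K * x⌋₊) := by
    ext j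
    simp only [Finset.mem_Icc, Finset.mem_filter, Finset.mem_Ioo]
    omega
  rw [hfilter, Finset.sum_filter, sum_Ioo_eq_sum_dyadicPairs]
  refine Finset.sum_congr rfl fun ⟨k, i⟩ hp => ?_
  have hi := (mk_mem_dyadicPairs.1 hp).2.1
  simp only [coefficient_mul_haarSystem hp hx0, midpointIndex_le_floor_iff hp x]
  split_ifs <;> first | rfl | omega

lemma le_iSup_abs_sum_Icc {K n : ℕ} (hn : 2 ^ K ≤ n) {x : ℝ} (hx0 : 0 ≤ x) (hx1 : x < 1) :
    (K : ℝ) / 3 ≤ ⨆ l : Fin n,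
      |∑ j ∈ Finset.Icc 1 (l.1 + 1), coefficient K j * haarSystem (rearrangement K j) x| := by
  set B := ∑ k ∈ Finset.range K, (binaryDigit k x : ℝ)
  have hsum (u v : ℝ) : ∑ k ∈ Finset.range K, (if binaryDigit k x = 0 then u else v) =
      K * u + (v - u) * B := by
    simp only [ite_binaryDigit_eq, Finset.sum_add_distrib, Finset.sum_const, Finset.card_range,
      nsmul_eq_mul, B, Finset.mul_sum]
  have hfull := sum_Icc_eq_sum_dyadicPairs hn hx0
  have hprefix := sum_Icc_floor_eq_sum_dyadicPairs K hx0 hx1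
  rw [sum_dyadicPairs_ite_floor _ _ _ hx0 hx1, hsum] at hfull hprefix
  have hB := (neg_le_abs _).trans <| abs_sum_Icc_le_iSup
    (fun j => coefficient K j * haarSystem (rearrangement K j) x)
    ((floor_two_pow_mul_lt hx0 hx1 K).le.trans hn)
  have hKB := (le_abs_self _).trans <| abs_sum_Icc_le_iSup
    (fun j => coefficient K j * haarSystem (rearrangement K j) x) (le_refl n)
  rw [hprefix] at hB
  rw [hfull] at hKB
  linarith

end NikishinUlyanov

open NikishinUlyanov

/-- **Nikishin–Ulyanov lower bound.** There is an absolute constant `c > 0` such that for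
every `n ≥ 2` there are coefficients `a_1, …, a_n`, not all zero, and a permutation `σ` of
`{1, …, n}` with `‖max_{1 ≤ m ≤ n} |∑_{k=1}^m a_k χ_{σ(k)}|‖₂ ≥
c √(log₂ n) (∑_{k=1}^n a_k²)^{1/2}`. -/
theorem nikishin_ulyanov_rearranged_haar_lower_bound :
    ∃ c : ℝ, 0 < c ∧ ∀ n : ℕ, 2 ≤ n →
      ∃ a : ℕ → ℝ, ∃ σ : ℕ → ℕ,
        Set.BijOn σ (Set.Icc 1 n) (Set.Icc 1 n) ∧
        (∃ k ∈ Finset.Icc 1 n, a k ≠ 0) ∧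
        ENNReal.ofReal (c * Real.sqrt (Real.logb 2 n) *
            Real.sqrt (∑ k ∈ Finset.Icc 1 n, a k ^ 2)) ≤
          eLpNorm
            (fun x => ⨆ m : Fin n, |∑ k ∈ Finset.Icc 1 (m.1 + 1), a k * haarSystem (σ k) x|)
            2 (volume.restrict (Set.Ico (0:ℝ) 1)) := by
  refine ⟨1 / 6, by norm_num, fun n hn => ?_⟩
  set K := Nat.log 2 n
  have hKn : 2 ^ K ≤ n := Nat.pow_log_le_self 2 (by omega)
  have hsq := sum_coefficient_sq hKn
  obtain ⟨j, hj, hj0⟩ := Finset.exists_ne_zero_of_sum_ne_zero <|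
    hsq.trans_ne (by exact_mod_cast (Nat.log_pos one_lt_two hn).ne')
  refine ⟨coefficient K, rearrangement K, rearrangement_bijOn hKn,
    ⟨j, hj, fun h => hj0 (by rw [h, zero_pow two_ne_zero])⟩, ?_⟩
  have : IsProbabilityMeasure (volume.restrict (Set.Ico (0 : ℝ) 1)) := ⟨by simp⟩
  rw [hsq]
  calc ENNReal.ofReal (1 / 6 * √(Real.logb 2 n) * √K)
      ≤ ENNReal.ofReal (K / 3) :=
        ENNReal.ofReal_le_ofReal (by nlinarith [sqrt_logb_mul_sqrt_natLog_le hn])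
    _ ≤ _ := ofReal_le_eLpNorm two_ne_zero <| (ae_restrict_iff' measurableSet_Ico).2 <|
        ae_of_all _ fun x hx => le_iSup_abs_sum_Icc hKn hx.1 hx.2
end
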